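/- arXiv:1506.08875 — 10 statements merged into one kernel-verified Lean document; each statement's English description precedes it below -/
import Mathlib

section
/- Let q be a prime power and t ≥ 1. Let ν ≥ 1, h ≥ 0 be integers with gcd(ν, t) = 1, and let m be a positive divisor of t. Write θ_{s} = (q^{s+1} − 1)/(q − 1). Then θ_{ν−1} is invertible modulo θ_{t−1}; denote its inverse by θ_{ν−1}^{−1}. For any integer n with n ≡ h·ν^{−1} (mod m) (where ν^{−1} is the inverse of ν modulo m), one has θ_{ν−1}^{−1}·θ_{h−1} ≡ (q^{νn} − 1)/(q^ν − 1) (mod θ_{m−1}). -/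
private def θ (q a : ℕ) : ℕ := ∑ i ∈ Finset.range a, q ^ i

private lemma theta_add (q a b : ℕ) : θ q (a + b) = θ q a + q ^ a * θ q b := by
  simp only [θ, Finset.sum_range_add, Finset.mul_sum, pow_add]

private lemma theta_dvd (q m k : ℕ) : θ q m ∣ θ q (m * k) := by
  induction k with
  | zero => simp [θ]
  | succ k ih =>
      rw [Nat.mul_succ, theta_add]
      exact Nat.dvd_add ih ((dvd_refl (θ q m)).mul_left _)

private lemma theta_mul (q ν n : ℕ) :
    θ q ν * (∑ i ∈ Finset.range n, q ^ (ν * i)) = θ q (ν * n) := by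
  induction n with
  | zero => simp [θ]
  | succ n ih =>
      rw [Finset.sum_range_succ, Nat.mul_add ν n 1, theta_add, ← ih, Nat.mul_one]
      ring

private lemma theta_modeq (q m : ℕ) {a b : ℕ} (hab : a ≡ b [MOD m]) :
    θ q a ≡ θ q b [MOD θ q m] := by
  wlog hle : a ≤ b generalizing a b
  · exact (this hab.symm (le_of_not_ge hle)).symm
  obtain ⟨c, rfl⟩ := Nat.exists_eq_add_of_le hle
  have hc : m ∣ c := by simpa using (Nat.modEq_iff_dvd' hle).mp hab
  obtain ⟨k, rfl⟩ := hc
  rw [theta_add]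
  have h0 : q ^ a * θ q (m * k) ≡ 0 [MOD θ q m] :=
    (Nat.modEq_zero_iff_dvd).mpr ((theta_dvd q m k).mul_left _)
  simpa using (Nat.ModEq.add_left (θ q a) h0).symm

private lemma theta_coprime_q (q : ℕ) {a : ℕ} (ha : 1 ≤ a) : Nat.Coprime q (θ q a) := by
  obtain ⟨b, rfl⟩ := Nat.exists_eq_add_of_le ha
  rw [theta_add]
  have h1 : θ q 1 = 1 := by simp [θ]
  rw [h1, pow_one]
  exact (Nat.coprime_add_mul_left_right q 1 (θ q b)).mpr (Nat.coprime_one_right q)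

private lemma theta_coprime_aux (q N : ℕ) : ∀ a b : ℕ, a + b ≤ N → Nat.Coprime a b →
    Nat.Coprime (θ q a) (θ q b) := by
  induction N with
  | zero =>
      intro a b hN hab
      have ha : a = 0 := by omega
      have hb : b = 0 := by omega
      subst ha; subst hb; simp [Nat.Coprime] at hab
  | succ N ih =>
      intro a b hN hab
      rcases Nat.eq_zero_or_pos a with rfl | ha
      · have : b = 1 := by simpa [Nat.Coprime] using hab
        subst this; simp [Nat.Coprime, θ]
      rcases Nat.eq_zero_or_pos b with rfl | hb
      · have : a = 1 := by simpa [Nat.Coprime] using hab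
        subst this; simp [Nat.Coprime, θ]
      rcases lt_trichotomy a b with hlt | rfl | hlt
      · have h1 : Nat.Coprime a (b - a) :=
          (Nat.coprime_sub_self_right (le_of_lt hlt)).mpr hab
        have h2 : Nat.Coprime (θ q a) (θ q (b - a)) := ih a (b - a) (by omega) h1
        have h3 : Nat.Coprime (θ q a) (q ^ a) :=
          Nat.Coprime.pow_right _ ((theta_coprime_q q ha).symm)
        have h4 : Nat.Coprime (θ q a) (θ q a + q ^ a * θ q (b - a)) := by
          rw [Nat.coprime_self_add_right]
          exact h3.mul_right h2
        rw [← theta_add, Nat.add_sub_cancel' (le_of_lt hlt)] at h4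
        exact h4
      · have : a = 1 := by simpa [Nat.Coprime] using hab
        subst this; simp [Nat.Coprime, θ]
      · have h1 : Nat.Coprime (a - b) b :=
          (Nat.coprime_sub_self_left (le_of_lt hlt)).mpr hab
        have h2 : Nat.Coprime (θ q (a - b)) (θ q b) := ih (a - b) b (by omega) h1
        have h3 : Nat.Coprime (q ^ b) (θ q b) :=
          Nat.Coprime.pow_left _ (theta_coprime_q q hb)
        have h4 : Nat.Coprime (θ q b + q ^ b * θ q (a - b)) (θ q b) := by
          rw [Nat.coprime_self_add_left]
          exact Nat.Coprime.mul h3 h2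
        rw [← theta_add, Nat.add_sub_cancel' (le_of_lt hlt)] at h4
        exact h4

theorem stmt2 (q t ν h m : ℕ) (hq : IsPrimePow q) (ht : 1 ≤ t) (hν : 1 ≤ ν)
    (hcop : Nat.gcd ν t = 1) (hm : m ∣ t) (hm0 : 0 < m) :
    (∃ u : ℕ, u * (∑ i ∈ Finset.range ν, q ^ i) ≡ 1 [MOD ∑ i ∈ Finset.range t, q ^ i]) ∧
    ∀ u n : ℕ,
      u * (∑ i ∈ Finset.range ν, q ^ i) ≡ 1 [MOD ∑ i ∈ Finset.range t, q ^ i] →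
      ν * n ≡ h [MOD m] →
      u * (∑ i ∈ Finset.range h, q ^ i) ≡
        (∑ i ∈ Finset.range n, q ^ (ν * i)) [MOD ∑ i ∈ Finset.range m, q ^ i] := by
  have hcopθ : Nat.Coprime (θ q ν) (θ q t) := theta_coprime_aux q (ν + t) ν t le_rfl hcop
  constructor
  · -- existence of inverse
    have hq2 : 2 ≤ q := hq.two_le
    have hpos : 0 < θ q t :=
      Finset.sum_pos (fun i _ => pow_pos (by omega) i) ⟨0, Finset.mem_range.mpr ht⟩
    haveI : NeZero (θ q t) := ⟨by omega⟩
    have hunit : IsUnit ((θ q ν : ℕ) : ZMod (θ q t)) :=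
      (ZMod.isUnit_iff_coprime _ _).mpr hcopθ
    obtain ⟨v, hv⟩ := hunit
    refine ⟨((↑v⁻¹ : ZMod (θ q t))).val, ?_⟩
    have key : ((((↑v⁻¹ : ZMod (θ q t))).val * θ q ν : ℕ) : ZMod (θ q t)) = ((1 : ℕ) : ZMod (θ q t)) := by
      push_cast
      rw [ZMod.natCast_val, ZMod.cast_id, ← hv]
      simp
    exact (ZMod.natCast_eq_natCast_iff _ _ _).mp key
  · intro u n hu hn
    have hdvd : θ q m ∣ θ q t := by
      obtain ⟨k, rfl⟩ := hm
      exact theta_dvd q m k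
    have hu' : u * θ q ν ≡ 1 [MOD θ q m] := hu.of_dvd hdvd
    have h1 : θ q ν * (∑ i ∈ Finset.range n, q ^ (ν * i)) ≡ θ q h [MOD θ q m] := by
      rw [theta_mul]
      exact theta_modeq q m hn
    calc u * θ q h ≡ u * (θ q ν * (∑ i ∈ Finset.range n, q ^ (ν * i))) [MOD θ q m] :=
          Nat.ModEq.mul_left u h1.symm
      _ = (u * θ q ν) * (∑ i ∈ Finset.range n, q ^ (ν * i)) := by ring
      _ ≡ 1 * (∑ i ∈ Finset.range n, q ^ (ν * i)) [MOD θ q m] := Nat.ModEq.mul_right _ hu'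
      _ = _ := by rw [one_mul]
end

section
/- Let q be a prime power, m ≥ 2, and let z ∈ F_{q^m} generate F_{q^m} over F_q (i.e., F_q(z) = F_{q^m}). Let ν ≥ 1 with gcd(ν, m) = 1, let 1 ≤ n ≤ m − 1, and set d = 1 + q^ν + q^{2ν} + ⋯ + q^{(n−1)ν}. Then the n+1 field elements obtained as (μ + λz)^d for n+1 points ⟨(μ, λ)⟩ in distinct directions of F_q² are linearly independent over F_q. In particular, any n+1 of the elements {(μ + λz)^d : (μ,λ) ∈ F_q² nonzero} lying on distinct F_q-lines of the plane ⟨1, z⟩_{F_q} are F_q-linearly independent. -/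
open Polynomial Finset

-- q^m - 1 ∣ q^N - 1 → m ∣ N  (for q ≥ 2, m ≥ 1)
lemma auxL1 {q m N : ℕ} (hq : 2 ≤ q) (hm : 1 ≤ m) (h : q ^ m - 1 ∣ q ^ N - 1) : m ∣ N := by
  have hq1 : 1 ≤ q := by omega
  set r := N % m with hr
  have hrm : r < m := Nat.mod_lt _ (by omega)
  have h1 : q ^ m ≡ 1 [MOD q ^ m - 1] := by
    have : 1 ≤ q ^ m := Nat.one_le_pow _ _ (by omega)
    exact ((Nat.modEq_iff_dvd' this).2 dvd_rfl).symm
  have h2 : q ^ N ≡ q ^ r [MOD q ^ m - 1] := by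
    conv_lhs => rw [← Nat.div_add_mod N m]
    rw [pow_add, pow_mul]
    calc (q ^ m) ^ (N / m) * q ^ r ≡ 1 ^ (N / m) * q ^ r [MOD q ^ m - 1] :=
          Nat.ModEq.mul_right _ (h1.pow _)
      _ = q ^ r := by rw [one_pow, one_mul]
  have h3 : q ^ m - 1 ∣ q ^ N - q ^ r := by
    have hle : q ^ r ≤ q ^ N := Nat.pow_le_pow_right (by omega) (Nat.mod_le _ _)
    exact (Nat.modEq_iff_dvd' hle).1 h2.symm
  have h4 : q ^ m - 1 ∣ q ^ r - 1 := by
    have h5 : q ^ r - 1 = (q ^ N - 1) - (q ^ N - q ^ r) := by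
      have hle : q ^ r ≤ q ^ N := Nat.pow_le_pow_right (by omega) (Nat.mod_le _ _)
      have : 1 ≤ q ^ r := Nat.one_le_pow _ _ (by omega)
      omega
    rw [h5]; exact Nat.dvd_sub h h3
  have hr0 : r = 0 := by
    by_contra hr0
    have : 1 ≤ q ^ r - 1 := by
      have : 2 ≤ q ^ r := le_trans hq (Nat.le_self_pow hr0 q)
      omega
    have := Nat.le_of_dvd (by omega) h4
    have hlt : q ^ r < q ^ m := Nat.pow_lt_pow_right (by omega) hrm
    omega
  exact Nat.dvd_of_mod_eq_zero hr0

-- step lemma for homogeneous evaluation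
lemma auxT_step {K : Type*} [Field K] (N : ℕ) (μ lam a b : K) (P : K[X])
    (hP : P.natDegree ≤ N) :
    ∑ k ∈ range (N + 2), μ ^ k * lam ^ (N + 1 - k) * (P * (C a + C b * X)).coeff k
      = (a * lam + b * μ) * ∑ k ∈ range (N + 1), μ ^ k * lam ^ (N - k) * P.coeff k := by
  have hsplit : P * (C a + C b * X) = C a * P + C b * (P * X) := by ring
  have hcoeff : ∀ k, (P * (C a + C b * X)).coeff k
      = a * P.coeff k + b * (P * X).coeff k := by
    intro k
    rw [hsplit, Polynomial.coeff_add, Polynomial.coeff_C_mul, Polynomial.coeff_C_mul]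
  have h1 : ∑ k ∈ range (N + 2), μ ^ k * lam ^ (N + 1 - k) * (a * P.coeff k)
      = a * lam * ∑ k ∈ range (N + 1), μ ^ k * lam ^ (N - k) * P.coeff k := by
    rw [Finset.sum_range_succ]
    have hPN : P.coeff (N + 1) = 0 :=
      Polynomial.coeff_eq_zero_of_natDegree_lt (by omega)
    rw [hPN, mul_zero, mul_zero, add_zero, Finset.mul_sum]
    refine Finset.sum_congr rfl fun k hk => ?_
    have hk' : k ≤ N := by simpa using Nat.lt_succ_iff.mp (Finset.mem_range.mp hk)
    have : N + 1 - k = (N - k) + 1 := by omega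
    rw [this, pow_succ]
    ring
  have h2 : ∑ k ∈ range (N + 2), μ ^ k * lam ^ (N + 1 - k) * (b * (P * X).coeff k)
      = b * μ * ∑ k ∈ range (N + 1), μ ^ k * lam ^ (N - k) * P.coeff k := by
    rw [Finset.sum_range_succ']
    have h0 : (P * X).coeff 0 = 0 := by
      simp [Polynomial.coeff_mul_X_zero]
    rw [h0, mul_zero, mul_zero, add_zero, Finset.mul_sum]
    refine Finset.sum_congr rfl fun k hk => ?_
    rw [Polynomial.coeff_mul_X]
    have : N + 1 - (k + 1) = N - k := by omega
    rw [this, pow_succ]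
    ring
  calc ∑ k ∈ range (N + 2), μ ^ k * lam ^ (N + 1 - k) * (P * (C a + C b * X)).coeff k
      = ∑ k ∈ range (N + 2), (μ ^ k * lam ^ (N + 1 - k) * (a * P.coeff k)
          + μ ^ k * lam ^ (N + 1 - k) * (b * (P * X).coeff k)) := by
        refine Finset.sum_congr rfl fun k _ => ?_
        rw [hcoeff k]; ring
    _ = _ := by rw [Finset.sum_add_distrib, h1, h2]; ring

lemma auxT_prod {K : Type*} [Field K] {ι : Type*} (S : Finset ι) (f g : ι → K)
    (μ lam : K) :
    ∑ k ∈ range (S.card + 1), μ ^ k * lam ^ (S.card - k)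
        * (∏ j ∈ S, (C (f j) + C (g j) * X)).coeff k
      = ∏ j ∈ S, (f j * lam + g j * μ) := by
  induction S using Finset.cons_induction with
  | empty => simp
  | cons i S hi ih =>
    rw [Finset.prod_cons, Finset.prod_cons, Finset.card_cons, mul_comm (C (f i) + C (g i) * X)]
    have hdeg : (∏ j ∈ S, (C (f j) + C (g j) * X)).natDegree ≤ S.card := by
      refine le_trans (Polynomial.natDegree_prod_le _ _) ?_
      calc ∑ j ∈ S, (C (f j) + C (g j) * X).natDegree ≤ ∑ j ∈ S, 1 := by
            refine Finset.sum_le_sum fun j _ => ?_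
            refine le_trans (Polynomial.natDegree_add_le _ _) ?_
            simp only [Polynomial.natDegree_C, max_le_iff]
            exact ⟨Nat.zero_le _, le_trans (Polynomial.natDegree_C_mul_le _ _)
              (by simp [Polynomial.natDegree_X])⟩
        _ = S.card := by simp
    rw [show S.card + 1 + 1 = S.card + 2 from rfl, auxT_step S.card μ lam _ _ _ hdeg, ih]

lemma auxSpan {K : Type*} [Field K] (n m : ℕ) (hm : 1 ≤ m) (Z : ℕ → K)
    (hper : ∀ j, Z (j + m) = Z j)
    (hne : ∀ t k, 1 ≤ k → k ≤ n → Z t ≠ Z (t + k)) (P : K[X]) (hP : P.natDegree ≤ n) :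
    P ∈ Submodule.span K (Set.range fun t => ∏ j ∈ range n, (X + C (Z (t + j)))) := by
  set W : ℕ → ℕ → K[X] := fun t k => ∏ j ∈ range k, (X + C (Z (t + j))) with hW
  set S := Submodule.span K (Set.range fun t => W t n) with hS
  have hWin : ∀ jj, jj ≤ n → ∀ t, W t (n - jj) ∈ S := by
    intro jj
    induction jj with
    | zero => intro _ t; exact Submodule.subset_span ⟨t, by simp⟩
    | succ jj ih =>
      intro hjj tt
      set k := n - (jj + 1) with hk
      have hk1 : n - jj = k + 1 := by omega
      have ihk : ∀ t, W t (k + 1) ∈ S := by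
        intro t; have := ih (by omega) t; rwa [hk1] at this
      -- first: W (t+1) k ∈ S for all t
      have hstep : ∀ t, W (t + 1) k ∈ S := by
        intro t
        have e1 : W t (k + 1) = W (t + 1) k * (X + C (Z t)) := by
          calc W t (k + 1)
              = (∏ j ∈ range k, (X + C (Z (t + (j + 1))))) * (X + C (Z (t + 0))) :=
                Finset.prod_range_succ' _ _
            _ = W (t + 1) k * (X + C (Z t)) := by
                rw [add_zero]
                exact congrArg (· * (X + C (Z t)))
                  (Finset.prod_congr rfl fun j _ => by
                    rw [show t + (j + 1) = t + 1 + j by omega])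
        have e2 : W (t + 1) (k + 1) = W (t + 1) k * (X + C (Z (t + 1 + k))) := by
          rw [hW]; exact Finset.prod_range_succ _ _
        have hzz : Z t - Z (t + 1 + k) ≠ 0 := by
          have := hne t (k + 1) (by omega) (by omega)
          rw [show t + (k + 1) = t + 1 + k by omega] at this
          exact sub_ne_zero_of_ne this
        have e4 : W t (k + 1) - W (t + 1) (k + 1) = (Z t - Z (t + 1 + k)) • W (t + 1) k := by
          rw [e1, e2, Polynomial.smul_eq_C_mul, map_sub]
          ring
        have e3 : W (t + 1) k = (Z t - Z (t + 1 + k))⁻¹ • (W t (k + 1) - W (t + 1) (k + 1)) := by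
          rw [e4, smul_smul, inv_mul_cancel₀ hzz, one_smul]
        rw [e3]
        exact Submodule.smul_mem _ _ (Submodule.sub_mem _ (ihk t) (ihk (t + 1)))
      cases tt with
      | zero =>
        have e0 : W 0 k = W m k := by
          refine Finset.prod_congr rfl fun j _ => ?_
          rw [zero_add, show m + j = j + m by omega, hper]
        rw [e0, show m = (m - 1) + 1 by omega]
        exact hstep _
      | succ t => exact hstep t
  have key : ∀ k, k ≤ n → ∀ P : K[X], P.natDegree ≤ k → P ∈ S := by
    intro k
    induction k with
    | zero =>
      intro _ P hP
      rw [Polynomial.eq_C_of_natDegree_le_zero hP]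
      have h1 : W 0 (n - n) ∈ S := hWin n le_rfl 0
      rw [show n - n = 0 by omega] at h1
      have : (C (P.coeff 0) : K[X]) = P.coeff 0 • W 0 0 := by
        rw [hW]; simp [Polynomial.smul_eq_C_mul]
      rw [this]
      exact Submodule.smul_mem _ _ h1
    | succ k ih =>
      intro hk P hP
      have hWk : W 0 (k + 1) ∈ S := by
        have := hWin (n - (k + 1)) (by omega) 0
        rwa [show n - (n - (k + 1)) = k + 1 by omega] at this
      have hmonic : (W 0 (k + 1)).Monic :=
        monic_prod_of_monic _ _ fun j _ => Polynomial.monic_X_add_C _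
      have hdeg : (W 0 (k + 1)).natDegree = k + 1 := by
        rw [hW]
        simp only []
        rw [Polynomial.natDegree_prod _ _ fun j _ => (Polynomial.monic_X_add_C _).ne_zero]
        simp [Polynomial.natDegree_X_add_C]
      have hco : (W 0 (k + 1)).coeff (k + 1) = 1 := by
        have := hmonic.coeff_natDegree
        rwa [hdeg] at this
      set Q := P - P.coeff (k + 1) • W 0 (k + 1) with hQ
      have hQdeg : Q.natDegree ≤ k := by
        rw [Polynomial.natDegree_le_iff_coeff_eq_zero]
        intro N hN
        rw [hQ, Polynomial.coeff_sub, Polynomial.coeff_smul, smul_eq_mul]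
        rcases eq_or_lt_of_le (Nat.succ_le_of_lt hN) with h | h
        · rw [← h, hco, mul_one, sub_self]
        · rw [Polynomial.coeff_eq_zero_of_natDegree_lt (p := P) (n := N) (by omega),
            Polynomial.coeff_eq_zero_of_natDegree_lt (p := W 0 (k + 1)) (n := N) (by omega)]
          simp
      have : P = Q + P.coeff (k + 1) • W 0 (k + 1) := by rw [hQ]; abel
      rw [this]
      exact Submodule.add_mem _ (ih (by omega) Q hQdeg) (Submodule.smul_mem _ _ hWk)
  exact key n le_rfl P hP

lemma auxLinDeg {K : Type*} [Field K] (a b : K) : (C a + C b * X : K[X]).natDegree ≤ 1 := by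
  refine le_trans (Polynomial.natDegree_add_le _ _) ?_
  simp only [Polynomial.natDegree_C, max_le_iff]
  exact ⟨Nat.zero_le _, le_trans (Polynomial.natDegree_C_mul_le _ _) (by simp [Polynomial.natDegree_X])⟩

theorem stmt4 (q m ν n : ℕ) (hq : IsPrimePow q) (hm : 2 ≤ m)
    (F K : Type*) [Field F] [Field K] [Algebra F K] [Fintype F] [Fintype K]
    (hF : Fintype.card F = q) (hK : Fintype.card K = q ^ m)
    (z : K) (hz : Algebra.adjoin F ({z} : Set K) = ⊤)
    (hν : 1 ≤ ν) (hcop : Nat.gcd ν m = 1) (hn : 1 ≤ n) (hnm : n ≤ m - 1)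
    (d : ℕ) (hd : d = ∑ i ∈ Finset.range n, q ^ (ν * i))
    (c : Fin (n + 1) → F × F) (hc0 : ∀ i, c i ≠ 0)
    (hdir : ∀ i j, i ≠ j → (c i).1 * (c j).2 ≠ (c i).2 * (c j).1) :
    LinearIndependent F
      (fun i => (algebraMap F K (c i).1 + algebraMap F K (c i).2 * z) ^ d) := by
  classical
  obtain ⟨p, s, hp, hs, hq'⟩ := hq
  have hpp : p.Prime := Nat.prime_iff.mpr hp
  haveI : Fact p.Prime := ⟨hpp⟩
  have hq2 : 2 ≤ q := by
    calc 2 ≤ p := hpp.two_le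
      _ ≤ p ^ s := Nat.le_self_pow (by omega) p
      _ = q := hq'
  haveI hcharF : CharP F p := by
    haveI := ringChar.charP F
    obtain ⟨n', hpr, hcard⟩ := FiniteField.card F (ringChar F)
    have heq : p = ringChar F := by
      have h1 : p ^ s = ringChar F ^ (n' : ℕ) := by rw [hq', ← hF, hcard]
      have hdvd : p ∣ ringChar F ^ (n' : ℕ) := h1 ▸ dvd_pow_self p (by omega)
      exact (Nat.prime_dvd_prime_iff_eq hpp hpr).1 (hpp.dvd_of_dvd_pow hdvd)
    rw [heq]; exact ringChar.charP F
  haveI : CharP K p := charP_of_injective_algebraMap (algebraMap F K).injective p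
  set R := algebraMap F K with hR
  have hRinj : Function.Injective R := (algebraMap F K).injective
  have fixpow : ∀ (b : ℕ) (x : K), x ^ b = x → ∀ e, x ^ b ^ e = x := by
    intro b x hx e
    induction e with
    | zero => rw [pow_zero, pow_one]
    | succ e ih => rw [pow_succ, pow_mul, ih, hx]
  have hxq : ∀ x : K, x ^ q ^ m = x := fun x => by rw [← hK]; exact FiniteField.pow_card x
  have hRfixq : ∀ a : F, (R a) ^ q = R a := fun a => by
    rw [hR, ← map_pow, ← hF, FiniteField.pow_card]
  have hRfix : ∀ (a : F) (e : ℕ), (R a) ^ q ^ e = R a := fun a e => fixpow q (R a) (hRfixq a) e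
  set Z : ℕ → K := fun j => z ^ q ^ (ν * j) with hZdef
  have hZshift : ∀ j r : ℕ, Z j ^ q ^ (ν * r) = Z (j + r) := by
    intro j r
    rw [hZdef]
    simp only []
    rw [← pow_mul, ← pow_add, ← Nat.mul_add]
  have hZper : ∀ j, Z (j + m) = Z j := by
    intro j
    rw [← hZshift j m, show ν * m = m * ν from Nat.mul_comm ν m, pow_mul]
    exact fixpow (q ^ m) (Z j) (hxq (Z j)) ν
  have hqe_eq : ∀ e : ℕ, q ^ e = p ^ (s * e) := fun e => by rw [← hq', ← pow_mul]
  let φ : ℕ → K →+* K := fun e =>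
    { toFun := fun x => x ^ q ^ e
      map_one' := one_pow _
      map_mul' := fun x y => mul_pow x y _
      map_zero' := zero_pow (pow_ne_zero e (by omega : q ≠ 0))
      map_add' := fun x y => by
        rw [hqe_eq e]
        exact add_pow_char_pow x y p (s * e) }
  have hφ : ∀ e x, φ e x = x ^ q ^ e := fun _ _ => rfl
  -- distinctness of the Z's within a window of length ≤ n
  have hgen : ∀ t : ℕ, Algebra.adjoin F {Z t} = ⊤ := by
    intro t
    let ψ : K →ₐ[F] K := { φ (ν * t) with commutes' := fun a => hRfix a (ν * t) }
    have hψinj : Function.Injective ψ := ψ.toRingHom.injective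
    have hψsurj : Function.Surjective ψ := Finite.surjective_of_injective hψinj
    have h1 : (Algebra.adjoin F ({z} : Set K)).map ψ = Algebra.adjoin F {ψ z} :=
      AlgHom.map_adjoin_singleton ψ z
    rw [hz] at h1
    have h2 : (⊤ : Subalgebra F K).map ψ = ⊤ := by
      rw [Algebra.map_top]
      exact (AlgHom.range_eq_top ψ).2 hψsurj
    rw [h2] at h1
    exact h1.symm
  have hfix : ∀ k, 1 ≤ k → k ≤ n → (∀ x : K, x ^ q ^ (ν * k) = x) → False := by
    intro k hk1 hk2 hall
    have hdvd : Fintype.card K - 1 ∣ q ^ (ν * k) - 1 := by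
      rw [← FiniteField.forall_pow_eq_one_iff]
      intro x
      have h1 : (x : K) ^ q ^ (ν * k) = (x : K) := hall _
      have hx0 : (x : K) ≠ 0 := Units.ne_zero x
      have he : q ^ (ν * k) = (q ^ (ν * k) - 1) + 1 := by
        have : 1 ≤ q ^ (ν * k) := Nat.one_le_pow _ _ (by omega)
        omega
      rw [he, pow_succ] at h1
      have h2 : (x : K) ^ (q ^ (ν * k) - 1) = 1 :=
        mul_right_cancel₀ hx0 (by rw [h1, one_mul])
      ext
      push_cast
      exact h2
    rw [hK] at hdvd
    have hm1 : m ∣ ν * k := auxL1 hq2 (by omega) hdvd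
    have hm2 : m ∣ k := by
      have hcop' : Nat.Coprime m ν := (Nat.coprime_comm.mp hcop)
      rw [Nat.mul_comm] at hm1
      first
      | exact hcop'.dvd_of_dvd_mul_left hm1
      | exact hcop'.dvd_of_dvd_mul_right hm1
      | · rw [Nat.mul_comm] at hm1
          first
          | exact hcop'.dvd_of_dvd_mul_left hm1
          | exact hcop'.dvd_of_dvd_mul_right hm1
    have := Nat.le_of_dvd (by omega) hm2
    omega
  have hZne : ∀ t k, 1 ≤ k → k ≤ n → Z t ≠ Z (t + k) := by
    intro t k hk1 hk2 heq
    let ρ : K →ₐ[F] K := { φ (ν * k) with commutes' := fun a => hRfix a (ν * k) }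
    have hZt : ρ (Z t) = Z t := by
      have h1 : ρ (Z t) = Z t ^ q ^ (ν * k) := rfl
      rw [h1, hZshift, ← heq]
    have hsub : Algebra.adjoin F ({Z t} : Set K) ≤ AlgHom.equalizer ρ (AlgHom.id F K) := by
      refine Algebra.adjoin_le ?_
      intro x hx
      rcases hx with rfl
      exact (AlgHom.mem_equalizer _ _ _).2 hZt
    rw [hgen t] at hsub
    refine hfix k hk1 hk2 fun x => ?_
    have hx : x ∈ AlgHom.equalizer ρ (AlgHom.id F K) := hsub (by trivial)
    exact (AlgHom.mem_equalizer _ _ _).1 hx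
  -- main argument
  rw [Fintype.linearIndependent_iff]
  intro g hg i0
  set W : ℕ → K[X] := fun t => ∏ j ∈ Finset.range n, (X + C (Z (t + j))) with hWdef
  have hv : ∀ i : Fin (n + 1), (R (c i).1 + R (c i).2 * z) ^ d
      = ∏ j ∈ Finset.range n, (R (c i).1 + R (c i).2 * Z j) := by
    intro i
    rw [hd, ← Finset.prod_pow_eq_pow_sum]
    refine Finset.prod_congr rfl fun j _ => ?_
    rw [hqe_eq (ν * j), add_pow_char_pow _ _ p (s * (ν * j)), ← hqe_eq (ν * j), mul_pow,
      hRfix, hRfix]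
  have hrel : ∀ r : ℕ, ∑ i : Fin (n + 1),
      R (g i) * ∏ j ∈ Finset.range n, (R (c i).1 + R (c i).2 * Z (r + j)) = 0 := by
    intro r
    have h0 : ∑ i : Fin (n + 1),
        R (g i) * ∏ j ∈ Finset.range n, (R (c i).1 + R (c i).2 * Z j) = 0 := by
      rw [← hg]
      refine Finset.sum_congr rfl fun i _ => ?_
      rw [Algebra.smul_def, hv i]
    have h1 := congrArg (φ (ν * r)) h0
    rw [map_sum, map_zero] at h1
    rw [← h1]
    refine Finset.sum_congr rfl fun i _ => ?_
    rw [map_mul, map_prod]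
    congr 1
    · exact (by rw [hφ, hRfix] : φ (ν * r) (R (g i)) = R (g i)).symm
    · refine Finset.prod_congr rfl fun j _ => ?_
      rw [map_add, map_mul, hφ, hφ, hφ, hRfix, hRfix, hZshift, Nat.add_comm j r]
  let Tm : K → K → (K[X] →ₗ[K] K) := fun a b =>
    ∑ k ∈ Finset.range (n + 1), (a ^ k * b ^ (n - k)) • Polynomial.lcoeff K k
  have hTm : ∀ a b P, Tm a b P = ∑ k ∈ Finset.range (n + 1), a ^ k * b ^ (n - k) * P.coeff k := by
    intro a b P
    simp [Tm, Polynomial.lcoeff_apply]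
  let Φ : K[X] →ₗ[K] K := ∑ i : Fin (n + 1), R (g i) • Tm (R (c i).1) (R (c i).2)
  have hΦ : ∀ P, Φ P = ∑ i : Fin (n + 1), R (g i) * Tm (R (c i).1) (R (c i).2) P := by
    intro P
    simp [Φ]
  have hΦW : ∀ r, Φ (W r) = 0 := by
    intro r
    rw [hΦ]
    have hT : ∀ i : Fin (n + 1), Tm (R (c i).1) (R (c i).2) (W r)
        = ∏ j ∈ Finset.range n, (R (c i).1 + R (c i).2 * Z (r + j)) := by
      intro i
      rw [hTm]
      have hWeq : W r = ∏ j ∈ Finset.range n, (C (Z (r + j)) + C (1 : K) * X) := by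
        refine Finset.prod_congr rfl fun j _ => by rw [map_one, one_mul, add_comm]
      rw [hWeq]
      have h2 := auxT_prod (Finset.range n) (fun j => Z (r + j)) (fun _ => (1 : K))
        (R (c i).1) (R (c i).2)
      rw [Finset.card_range] at h2
      rw [h2]
      exact Finset.prod_congr rfl fun j _ => by ring
    rw [Finset.sum_congr rfl fun i _ => by rw [hT i]]
    exact hrel r
  have hspan : ∀ P : K[X], P.natDegree ≤ n → Φ P = 0 := by
    intro P hP
    have hmem := auxSpan n m (by omega) Z hZper hZne P hP
    have hle : Submodule.span K (Set.range fun t => W t) ≤ LinearMap.ker Φ := by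
      rw [Submodule.span_le]
      rintro _ ⟨t, rfl⟩
      exact LinearMap.mem_ker.2 (hΦW t)
    exact LinearMap.mem_ker.1 (hle hmem)
  set E := Finset.univ.erase i0 with hE
  have hEcard : E.card = n := by
    rw [hE, Finset.card_erase_of_mem (Finset.mem_univ _), Finset.card_univ, Fintype.card_fin]
    omega
  set Kp : K[X] := ∏ i' ∈ E, (C (R (c i').1) + C (- R (c i').2) * X) with hKp
  have hKpdeg : Kp.natDegree ≤ n := by
    refine le_trans (Polynomial.natDegree_prod_le _ _) ?_
    have hb : ∑ i' ∈ E, (C (R (c i').1) + C (- R (c i').2) * X).natDegree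
        ≤ ∑ _i' ∈ E, 1 := Finset.sum_le_sum fun i' _ => auxLinDeg _ _
    refine le_trans hb ?_
    rw [Finset.sum_const, smul_eq_mul, mul_one, hEcard]
  have h0 := hspan Kp hKpdeg
  rw [hΦ] at h0
  have hTKp : ∀ i : Fin (n + 1), Tm (R (c i).1) (R (c i).2) Kp
      = ∏ i' ∈ E, (R (c i').1 * R (c i).2 + (- R (c i').2) * R (c i).1) := by
    intro i
    rw [hTm, hKp]
    have h2 := auxT_prod E (fun i' => R (c i').1) (fun i' => - R (c i').2)
      (R (c i).1) (R (c i).2)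
    rw [hEcard] at h2
    exact h2
  rw [Finset.sum_congr rfl fun i _ => by rw [hTKp i]] at h0
  rw [Finset.sum_eq_single_of_mem i0 (Finset.mem_univ _) ?side] at h0
  case side =>
    intro i _ hii0
    have hiE : i ∈ E := Finset.mem_erase.2 ⟨hii0, Finset.mem_univ _⟩
    have : (R (c i).1 * R (c i).2 + (- R (c i).2) * R (c i).1) = 0 := by ring
    rw [Finset.prod_eq_zero hiE this, mul_zero]
  have hne0 : ∏ i' ∈ E, (R (c i').1 * R (c i0).2 + (- R (c i').2) * R (c i0).1) ≠ 0 := by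
    rw [Finset.prod_ne_zero_iff]
    intro i' hi' hzero
    refine hdir i' i0 (Finset.ne_of_mem_erase hi') (hRinj ?_)
    rw [map_mul, map_mul]
    have : R (c i').1 * R (c i0).2 = R (c i').2 * R (c i0).1 := by
      linear_combination hzero
    exact this
  rcases mul_eq_zero.1 h0 with h | h
  · exact hRinj (by rw [h, map_zero])
  · exact absurd h hne0
end

section
/- Let q be a prime power, t ≥ 1, and let ℓ be a 2-dimensional F_q-subspace of F_{q^t} of order m (i.e., m is the smallest integer such that ℓ is contained in a 1-dimensional F_{q^m}-subspace of F_{q^t}). If d ≡ d′ (mod θ_{m−1}) where θ_{m−1} = (q^m − 1)/(q − 1), then there exists β ∈ F_{q^t}^* such that for every nonzero x ∈ ℓ, ⟨β x^d⟩_{F_q} = ⟨x^{d′}⟩_{F_q}. Hence the point sets ℓ^d = {⟨x^d⟩_{F_q} : x ∈ ℓ \ {0}} and ℓ^{d′} are projectively equivalent under an F_q-linear map of F_{q^t}. -/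
/-- Geometric sum identity in ℕ: `(∑_{i<m} (r+1)^i) * r + 1 = (r+1)^m`. -/
lemma geom_sum_aux (r m : ℕ) :
    (∑ i ∈ Finset.range m, (r + 1) ^ i) * r + 1 = (r + 1) ^ m := by
  induction m with
  | zero => simp
  | succ n ih =>
    rw [Finset.sum_range_succ, add_mul, pow_succ]
    nlinarith [ih]

/-- In a finite-field extension, an element fixed by `x ↦ x^q` (q = card of the base)
lies in the image of the base field. -/
lemma fixed_mem_range_aux {F K : Type*} [Field F] [Field K] [Algebra F K]
    [Fintype F] [Fintype K] {w : K} (hw : w ^ Fintype.card F = w) :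
    ∃ a : F, algebraMap F K a = w := by
  classical
  have hq1 : 1 < Fintype.card F := Fintype.one_lt_card
  -- the polynomial X^q - X
  set p : Polynomial K := Polynomial.X ^ Fintype.card F - Polynomial.X with hp
  have hdeg : p.natDegree = Fintype.card F := by
    rw [hp, Polynomial.natDegree_sub_eq_left_of_natDegree_lt, Polynomial.natDegree_X_pow]
    rw [Polynomial.natDegree_X, Polynomial.natDegree_X_pow]
    exact hq1
  have hpne : p ≠ 0 := by
    intro h
    rw [h, Polynomial.natDegree_zero] at hdeg
    omega
  -- the image of F in K
  set S : Finset K := Finset.univ.image (algebraMap F K) with hS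
  have hcardS : S.card = Fintype.card F := by
    rw [hS, Finset.card_image_of_injective _ (algebraMap F K).injective,
      Finset.card_univ]
  have hroot : ∀ x ∈ S, p.IsRoot x := by
    intro x hx
    rw [hS, Finset.mem_image] at hx
    obtain ⟨a, -, rfl⟩ := hx
    have : (algebraMap F K) a ^ Fintype.card F = algebraMap F K a := by
      rw [← map_pow, FiniteField.pow_card]
    simp [hp, Polynomial.IsRoot, this]
  have hwroot : p.IsRoot w := by simp [hp, Polynomial.IsRoot, hw]
  by_contra hcon
  push_neg at hcon
  have hwS : w ∉ S := by
    intro h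
    rw [hS, Finset.mem_image] at h
    obtain ⟨a, -, ha⟩ := h
    exact hcon a ha
  have hsub : insert w S ⊆ p.roots.toFinset := by
    intro x hx
    rw [Finset.mem_insert] at hx
    rw [Multiset.mem_toFinset, Polynomial.mem_roots hpne]
    rcases hx with rfl | hx
    · exact hwroot
    · exact hroot x hx
  have hcard1 : (insert w S).card = Fintype.card F + 1 := by
    rw [Finset.card_insert_of_notMem hwS, hcardS]
  have hcard2 : p.roots.toFinset.card ≤ Fintype.card F := by
    calc p.roots.toFinset.card ≤ Multiset.card p.roots := p.roots.toFinset_card_le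
    _ ≤ p.natDegree := Polynomial.card_roots' p
    _ ≤ Fintype.card F := le_of_eq hdeg
  have := Finset.card_le_card hsub
  omega

theorem stmt5 (q t m d d' : ℕ) (hq : IsPrimePow q) (ht : 1 ≤ t)
    (F K : Type*) [Field F] [Field K] [Algebra F K] [Fintype F] [Fintype K]
    (hF : Fintype.card F = q) (hK : Fintype.card K = q ^ t)
    (ℓ : Submodule F K) (hdim : Module.finrank F ℓ = 2)
    (horder : ∀ x y : K, x ∈ ℓ → y ∈ ℓ → LinearIndependent F ![x, y] →
      Module.finrank F (Algebra.adjoin F ({y / x} : Set K)) = m)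
    (hdd' : d ≡ d' [MOD ∑ i ∈ Finset.range m, q ^ i]) :
    ∃ β : K, β ≠ 0 ∧ ∀ x ∈ ℓ, x ≠ 0 →
      Submodule.span F {β * x ^ d} = Submodule.span F ({x ^ d'} : Set K) := by
  classical
  have hq2 : 2 ≤ q := hq.two_le
  -- pick a basis x₀, y₀ of ℓ
  have : Module.Finite F ℓ := Module.Finite.of_finite
  let b := Module.finBasisOfFinrankEq F ℓ hdim
  set x₀ : K := (b 0 : K) with hx₀def
  set y₀ : K := (b 1 : K) with hy₀def
  have hx₀mem : x₀ ∈ ℓ := (b 0).2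
  have hy₀mem : y₀ ∈ ℓ := (b 1).2
  have hli : LinearIndependent F ![x₀, y₀] := by
    have h1 := b.linearIndependent
    have h2 : LinearIndependent F (fun i : Fin 2 => ((b i : ℓ) : K)) :=
      h1.map' ℓ.subtype (Submodule.ker_subtype ℓ)
    have : ![x₀, y₀] = fun i : Fin 2 => ((b i : ℓ) : K) := by
      funext i
      fin_cases i <;> simp [hx₀def, hy₀def]
    rwa [this]
  have hx₀ne : x₀ ≠ 0 := by
    intro h
    have := hli.ne_zero 0
    simp [h] at this
  -- z generates the subfield E of order q^m
  set z : K := y₀ / x₀ with hz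
  set E := Algebra.adjoin F ({z} : Set K) with hE
  have hEfr : Module.finrank F E = m := horder x₀ y₀ hx₀mem hy₀mem hli
  have : Module.Finite F K := Module.Finite.of_finite
  have hEfin : Module.Finite F E := Module.Finite.of_finite
  have hcardE : Fintype.card E = q ^ m := by
    rw [Module.card_eq_pow_finrank (K := F) (V := E), hF, hEfr]
  -- arithmetic of the geometric sum
  set θ : ℕ := ∑ i ∈ Finset.range m, q ^ i with hθ
  have hθq : θ * (q - 1) + 1 = q ^ m := by
    have hq1 : q - 1 + 1 = q := by omega
    have h := geom_sum_aux (q - 1) m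
    rw [hq1] at h
    rw [hθ]
    exact h
  -- the key fact: u^θ lands in F for u ∈ E nonzero
  have key : ∀ u : K, u ∈ E → u ≠ 0 → ∃ a : F, a ≠ 0 ∧ algebraMap F K a = u ^ θ := by
    intro u huE hune
    have hpow : u ^ (q ^ m - 1) = 1 := by
      letI : Field E := Fintype.fieldOfDomain E
      have hne : (⟨u, huE⟩ : E) ≠ 0 := by
        intro h
        apply hune
        exact congrArg Subtype.val h
      have h1 := FiniteField.pow_card_sub_one_eq_one (⟨u, huE⟩ : E) hne
      rw [hcardE] at h1
      have h3 := congrArg (Subtype.val) h1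
      simpa using h3
    have hwfix : (u ^ θ) ^ Fintype.card F = u ^ θ := by
      rw [hF, ← pow_mul]
      have hqm1 : θ * q = θ * (q - 1) + θ := by
        have h : q - 1 + 1 = q := by omega
        calc θ * q = θ * ((q - 1) + 1) := by rw [h]
        _ = θ * (q - 1) + θ := by ring
      rw [hqm1, pow_add]
      have h2 : θ * (q - 1) = q ^ m - 1 := by omega
      rw [h2, hpow, one_mul]
    obtain ⟨a, ha⟩ := fixed_mem_range_aux hwfix
    refine ⟨a, ?_, ha⟩
    intro h
    rw [h, map_zero] at ha
    exact (pow_ne_zero θ hune) ha.symm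
  -- every nonzero x ∈ ℓ can be written x = x₀ * u with u ∈ E, u ≠ 0
  have hrep : ∀ x ∈ ℓ, x ≠ 0 → ∃ u : K, u ∈ E ∧ u ≠ 0 ∧ x = x₀ * u := by
    intro x hx hxne
    -- x is an F-combination of x₀ and y₀
    have hspan : x ∈ Submodule.span F ({x₀, y₀} : Set K) := by
      have hb : Submodule.span F (Set.range ⇑b) = ⊤ := b.span_eq
      have hmap := congrArg (Submodule.map ℓ.subtype) hb
      rw [Submodule.map_span, Submodule.map_top, Submodule.range_subtype] at hmap
      have hcomp : ℓ.subtype '' Set.range ⇑b =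
          Set.range (fun i : Fin 2 => ((b i : ℓ) : K)) := by
        rw [← Set.range_comp]
        rfl
      rw [hcomp] at hmap
      have hr : Set.range (fun i : Fin 2 => ((b i : ℓ) : K)) = {x₀, y₀} := by
        ext w
        constructor
        · rintro ⟨i, rfl⟩
          fin_cases i <;> simp [hx₀def, hy₀def]
        · rintro (rfl | rfl)
          · exact ⟨0, rfl⟩
          · exact ⟨1, rfl⟩
      rw [hr] at hmap
      rw [hmap]
      exact hx
    rw [Submodule.mem_span_pair] at hspan
    obtain ⟨a, c, hac⟩ := hspan
    have hfac : (a • x₀ + c • y₀ : K)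
        = x₀ * (algebraMap F K a + algebraMap F K c * z) := by
      rw [Algebra.smul_def, Algebra.smul_def, hz]
      field_simp
    refine ⟨algebraMap F K a + algebraMap F K c * z, ?_, ?_, ?_⟩
    · exact add_mem (algebraMap_mem E a)
        (mul_mem (algebraMap_mem E c) (Algebra.self_mem_adjoin_singleton F z))
    · intro h
      apply hxne
      rw [← hac, hfac, h, mul_zero]
    · rw [← hac, hfac]
  -- now split on which of d, d' is larger
  rcases le_total d d' with hle | hle
  · -- d' = d + θ * k
    obtain ⟨c, hc⟩ := (Nat.modEq_iff_dvd' hle).mp hdd'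
    refine ⟨x₀ ^ (d' - d), pow_ne_zero _ hx₀ne, ?_⟩
    intro x hx hxne
    obtain ⟨u, huE, hune, rfl⟩ := hrep x hx hxne
    obtain ⟨a, hane, ha⟩ := key u huE hune
    have hxd' : (x₀ * u) ^ d' = (a ^ c) • (x₀ ^ (d' - d) * (x₀ * u) ^ d) := by
      rw [Algebra.smul_def, map_pow, ha]
      have h1 : (x₀ * u) ^ d' = (x₀ * u) ^ d * (x₀ * u) ^ (d' - d) := by
        rw [← pow_add]
        congr 1
        omega
      rw [h1, mul_pow x₀ u (d' - d), hc, pow_mul]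
      ring
    rw [hxd']
    exact (Submodule.span_singleton_smul_eq
      (IsUnit.mk0 _ (pow_ne_zero c hane)) _).symm
  · -- d = d' + θ * k
    obtain ⟨c, hc⟩ := (Nat.modEq_iff_dvd' hle).mp hdd'.symm
    refine ⟨(x₀ ^ (d - d'))⁻¹, inv_ne_zero (pow_ne_zero _ hx₀ne), ?_⟩
    intro x hx hxne
    obtain ⟨u, huE, hune, rfl⟩ := hrep x hx hxne
    obtain ⟨a, hane, ha⟩ := key u huE hune
    have hxd : (x₀ ^ (d - d'))⁻¹ * (x₀ * u) ^ d = (a ^ c) • ((x₀ * u) ^ d') := by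
      rw [Algebra.smul_def, map_pow, ha]
      have h1 : (x₀ * u) ^ d = (x₀ * u) ^ d' * (x₀ * u) ^ (d - d') := by
        rw [← pow_add]
        congr 1
        omega
      rw [h1, mul_pow x₀ u (d - d'), hc, pow_mul]
      field_simp
      ring
    rw [hxd]
    exact Submodule.span_singleton_smul_eq
      (IsUnit.mk0 _ (pow_ne_zero c hane)) _
end

section
/- Let q be a prime power and m ≥ 2, with q ≥ m − 1. Let z ∈ F_{q^m} satisfy F_q(z) = F_{q^m}, let ν ≥ 1 with gcd(ν, m) = 1, let 1 ≤ n ≤ m − 1, and let d = 1 + q^ν + ⋯ + q^{(n−1)ν}. Then the point set ℓ^d = {⟨(μ + λ z)^d⟩_{F_q} : (μ, λ) ∈ F_q² \ {(0,0)}} is a normal rational curve of order n in an n-dimensional projective subspace of PG(m−1, q): that is, there is an F_q-linear isomorphism from F_q^{n+1} onto the F_q-span of ℓ^d taking the standard rational normal curve {⟨(1, λ, λ², …, λⁿ)⟩ : λ ∈ F_q} ∪ {⟨(0,…,0,1)⟩} onto ℓ^d. -/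
/-!
Let `σ = Frob^ν`, which generates `Gal(K/F)` because `gcd(ν, m) = 1`. Since
`(a + b z)^d = ∏_{i<n} σ^i (a + b z) = ∏_{i<n} (a + b σ^i z)`, the points of `ℓ^d` are the values
at `(a, b)` of the homogenisation of `B(X) = ∏_{i<n} (1 + σ^i(z) X)`, a polynomial of degree `n`.
So the map `v ↦ ∑ v_j B_j` sends the standard rational normal curve onto `ℓ^d`, and it is
injective because `B_0, …, B_n` are `F`-linearly independent: applying `σ` to a relation
`∑ c_j B_j = 0` and subtracting leaves `(σ^n z - z) ∑ c_{j+1} B'_j = 0`, where `B'` is the analogous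
polynomial of degree `n - 1` for `σ z`, and `σ^n z ≠ z` as `n < m`.
-/

open Polynomial Finset Module FiniteField

theorem sum_fin_pow_smul_coeff_eq_eval {F K : Type*} [CommRing F] [CommRing K] [Algebra F K]
    {n : ℕ} {p : K[X]} (hp : p.natDegree ≤ n) (b : F) :
    ∑ i : Fin (n + 1), b ^ (i : ℕ) • p.coeff i = p.eval (algebraMap F K b) := by
  rw [eval_eq_sum_range' (Nat.lt_succ_of_le hp), ← Fin.sum_univ_eq_sum_range]
  simp [Algebra.smul_def, mul_comm]

section OrbitPoly

variable {F K : Type*} [CommRing F] [CommRing K] [Algebra F K] (σ : K →ₐ[F] K)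

noncomputable def orbitPoly (w : K) (k : ℕ) : K[X] :=
  ∏ i ∈ range k, (1 + C ((σ ^ i) w) * X)

theorem AlgHom.pow_succ_apply (w : K) (i : ℕ) : (σ ^ (i + 1)) w = (σ ^ i) (σ w) := by
  rw [pow_succ, AlgHom.mul_apply]

theorem AlgHom.pow_succ_apply' (w : K) (i : ℕ) : (σ ^ (i + 1)) w = σ ((σ ^ i) w) := by
  rw [pow_succ', AlgHom.mul_apply]

theorem natDegree_one_add_C_mul_X_le (a : K) : (1 + C a * X).natDegree ≤ 1 := by
  compute_degree

theorem natDegree_orbitPoly_le (w : K) (k : ℕ) : (orbitPoly σ w k).natDegree ≤ k := by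
  refine (natDegree_prod_le _ _).trans ?_
  simpa using sum_le_card_nsmul (range k) _ 1 fun i _ => natDegree_one_add_C_mul_X_le ((σ ^ i) w)

theorem coeff_orbitPoly_zero (w : K) (k : ℕ) : (orbitPoly σ w k).coeff 0 = 1 := by
  simp [coeff_zero_eq_eval_zero, orbitPoly, eval_prod]

theorem coeff_orbitPoly_self (w : K) (k : ℕ) :
    (orbitPoly σ w k).coeff k = ∏ i ∈ range k, (σ ^ i) w := by
  simpa [orbitPoly, coeff_one, -AlgHom.coe_pow] using
    coeff_prod_of_natDegree_le (s := range k) _ 1 fun i _ =>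
      natDegree_one_add_C_mul_X_le ((σ ^ i) w)

theorem eval_algebraMap_orbitPoly (w : K) (k : ℕ) (b : F) :
    (orbitPoly σ w k).eval (algebraMap F K b) =
      ∏ i ∈ range k, (σ ^ i) (1 + algebraMap F K b * w) := by
  simp [orbitPoly, eval_prod, mul_comm (algebraMap F K b), -AlgHom.coe_pow]

theorem map_orbitPoly (w : K) (k : ℕ) :
    (orbitPoly σ w k).map (σ : K →+* K) = orbitPoly σ (σ w) k := by
  simp [orbitPoly, Polynomial.map_prod, ← AlgHom.pow_succ_apply', AlgHom.pow_succ_apply,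
    -AlgHom.coe_pow]

theorem orbitPoly_apply_succ_sub (w : K) (k : ℕ) :
    orbitPoly σ (σ w) (k + 1) - orbitPoly σ w (k + 1) =
      C ((σ ^ (k + 1)) w - w) * (X * orbitPoly σ (σ w) k) := by
  have hshift : orbitPoly σ w (k + 1) = orbitPoly σ (σ w) k * (1 + C w * X) := by
    simp [orbitPoly, prod_range_succ', ← AlgHom.pow_succ_apply, -AlgHom.coe_pow]
  rw [hshift, orbitPoly, prod_range_succ, ← orbitPoly, ← AlgHom.pow_succ_apply, map_sub]
  ring

end OrbitPoly

theorem linearIndependent_coeff_orbitPoly {F K : Type*} [Field F] [Field K] [Algebra F K]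
    (σ : K →ₐ[F] K) {k : ℕ} (w : K) (hw : ∀ i, 1 ≤ i → i ≤ k → (σ ^ i) w ≠ w) :
    LinearIndependent F fun j : Fin (k + 1) => (orbitPoly σ w k).coeff j := by
  induction k generalizing w with
  | zero => simp [coeff_orbitPoly_zero]
  | succ k ih =>
    have hσw : ∀ i, 1 ≤ i → i ≤ k → (σ ^ i) (σ w) ≠ σ w := fun i hi1 hik h =>
      hw i hi1 (by omega) <| (σ : K →+* K).injective <|
        (σ.pow_succ_apply' w i).symm.trans <| (σ.pow_succ_apply w i).trans h
    have hδ : (σ ^ (k + 1)) w - w ≠ 0 := sub_ne_zero.mpr (hw (k + 1) le_add_self le_rfl)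
    rw [Fintype.linearIndependent_iff]
    intro g hg
    have hgσ : ∑ j, g j • (orbitPoly σ (σ w) (k + 1)).coeff j = 0 := by
      simpa [← map_orbitPoly, -AlgHom.coe_pow] using congr_arg σ hg
    have htail : ∑ j : Fin (k + 1), g j.succ • (orbitPoly σ (σ w) k).coeff j = 0 := by
      have h : ((σ ^ (k + 1)) w - w) * ∑ j, g j • (X * orbitPoly σ (σ w) k).coeff j = 0 := by
        simp_rw [mul_sum, mul_smul_comm, ← coeff_C_mul, ← orbitPoly_apply_succ_sub, coeff_sub,
          smul_sub, sum_sub_distrib, hgσ, hg, sub_zero]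
      simpa [Fin.sum_univ_succ, coeff_X_mul] using (mul_eq_zero.mp h).resolve_left hδ
    have hsucc : ∀ j : Fin (k + 1), g j.succ = 0 :=
      Fintype.linearIndependent_iff.mp (ih (σ w) hσw) _ htail
    have hzero : g 0 = 0 := by
      simpa [Fin.sum_univ_succ, hsucc, coeff_orbitPoly_zero] using hg
    exact Fin.cases hzero hsucc

section Frobenius

variable {F K : Type*} [Field F] [Fintype F] [Field K] [Algebra F K]

theorem frobeniusAlgHom_pow_apply (e : ℕ) (x : K) :
    (frobeniusAlgHom F K ^ e) x = x ^ Fintype.card F ^ e := by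
  rw [AlgHom.coe_pow, coe_frobeniusAlgHom, pow_iterate]

theorem prod_range_frobeniusAlgHom_pow_pow_apply (ν n : ℕ) (x : K) :
    ∏ i ∈ range n, ((frobeniusAlgHom F K ^ ν) ^ i) x =
      x ^ ∑ i ∈ range n, Fintype.card F ^ (ν * i) := by
  simp_rw [← prod_pow_eq_pow_sum, ← pow_mul, frobeniusAlgHom_pow_apply]

theorem frobeniusAlgHom_pow_pow_apply_ne [Finite K] {ν k : ℕ} (hν : ν.Coprime (finrank F K))
    (hk0 : 0 < k) (hk : k < finrank F K) {z : K} (hz : Algebra.adjoin F {z} = ⊤) :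
    ((frobeniusAlgHom F K ^ ν) ^ k) z ≠ z := by
  intro h
  have hone : (frobeniusAlgHom F K ^ ν) ^ k = 1 :=
    AlgHom.ext_of_adjoin_eq_top hz (by simpa [-AlgHom.coe_pow] using h)
  have hdvd : finrank F K ∣ ν * k := by
    rw [← orderOf_frobeniusAlgHom]
    exact orderOf_dvd_of_pow_eq_one (by rwa [pow_mul])
  exact absurd (Nat.le_of_dvd hk0 (hν.symm.dvd_of_dvd_mul_left hdvd)) (by omega)

end Frobenius

section RationalNormalCurve

variable (F : Type*) [Field F]

def rationalNormalCurve (n : ℕ) : Set (Fin (n + 1) → F) :=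
  {v | ∃ lam : F, v = fun i => lam ^ i.val} ∪ {fun i => if i.val = n then 1 else 0}

variable {F} {K : Type*} [CommRing K] [Algebra F K]

theorem span_algebraMap_add_mul_pow {a : F} (ha : a ≠ 0) (b : F) (x : K) (d : ℕ) :
    Submodule.span F {(algebraMap F K a + algebraMap F K b * x) ^ d} =
      Submodule.span F {(1 + algebraMap F K (b / a) * x) ^ d} := by
  have h : algebraMap F K a + algebraMap F K b * x = a • (1 + algebraMap F K (b / a) * x) := by
    rw [Algebra.smul_def, mul_add, mul_one, ← mul_assoc, ← map_mul, mul_div_cancel₀ b ha]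
  rw [h, _root_.smul_pow, Submodule.span_singleton_smul_eq (pow_ne_zero d ha).isUnit]

theorem image_span_rationalNormalCurve {n : ℕ} (φ : (Fin (n + 1) → F) →ₗ[F] K) (x : K) (d : ℕ)
    (hφ : ∀ b : F, φ (fun i => b ^ i.val) = (1 + algebraMap F K b * x) ^ d)
    (hφ_last : φ (fun i => if i.val = n then 1 else 0) = x ^ d) :
    (fun v => Submodule.span F {φ v}) '' rationalNormalCurve F n =
      {P | ∃ a b : F, (a, b) ≠ 0 ∧
        P = Submodule.span F {(algebraMap F K a + algebraMap F K b * x) ^ d}} := by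
  ext P
  constructor
  · rintro ⟨v, ⟨b, rfl⟩ | rfl, rfl⟩
    · exact ⟨1, b, by simp, by simp [hφ]⟩
    · exact ⟨0, 1, by simp, by simp [hφ_last]⟩
  · rintro ⟨a, b, hab, rfl⟩
    by_cases ha : a = 0
    · subst ha
      have hb : b ≠ 0 := by rintro rfl; exact hab rfl
      refine ⟨_, Or.inr rfl, ?_⟩
      dsimp only
      rw [hφ_last, map_zero, zero_add, mul_pow, ← map_pow, ← Algebra.smul_def,
        Submodule.span_singleton_smul_eq (pow_ne_zero d hb).isUnit]
    · exact ⟨_, Or.inl ⟨b / a, rfl⟩, by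
      dsimp only; rw [hφ, span_algebraMap_add_mul_pow ha]⟩

end RationalNormalCurve

theorem stmt7_general (q m ν n : ℕ)
    (F K : Type*) [Field F] [Field K] [Algebra F K] [Fintype F] [Fintype K]
    (hF : Fintype.card F = q) (hK : Fintype.card K = q ^ m)
    (z : K) (hz : Algebra.adjoin F ({z} : Set K) = ⊤)
    (hcop : Nat.gcd ν m = 1) (hnm : n ≤ m - 1)
    (d : ℕ) (hd : d = ∑ i ∈ Finset.range n, q ^ (ν * i)) :
    ∃ φ : (Fin (n + 1) → F) →ₗ[F] K, Function.Injective φ ∧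
      (fun v : Fin (n + 1) → F => Submodule.span F {φ v}) ''
        ({v : Fin (n + 1) → F | ∃ lam : F, v = fun i : Fin (n + 1) => lam ^ i.val} ∪
          {(fun i : Fin (n + 1) => if i.val = n then 1 else 0)}) =
      {P : Submodule F K | ∃ a b : F, (a, b) ≠ 0 ∧
        P = Submodule.span F {(algebraMap F K a + algebraMap F K b * z) ^ d}} := by
  set σ := frobeniusAlgHom F K ^ ν
  have hrank : finrank F K = m := Nat.pow_right_injective (hF ▸ Fintype.one_lt_card)
    (by dsimp only; rw [← hF, ← Module.card_eq_pow_finrank, hK, hF])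
  have hprod : ∀ y : K, ∏ i ∈ range n, (σ ^ i) y = y ^ d := fun y => by
    rw [prod_range_frobeniusAlgHom_pow_pow_apply, hF, hd]
  have hind : LinearIndependent F fun j : Fin (n + 1) => (orbitPoly σ z n).coeff j :=
    linearIndependent_coeff_orbitPoly σ z fun k hk1 hkn =>
      frobeniusAlgHom_pow_pow_apply_ne (by rwa [hrank, Nat.coprime_iff_gcd_eq_one]) hk1
        (by omega) hz
  refine ⟨Fintype.linearCombination F fun j => (orbitPoly σ z n).coeff j,
    hind.fintypeLinearCombination_injective, image_span_rationalNormalCurve _ z d ?_ ?_⟩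
  · intro b
    rw [Fintype.linearCombination_apply, sum_fin_pow_smul_coeff_eq_eval (natDegree_orbitPoly_le ..),
      eval_algebraMap_orbitPoly, hprod]
  · simp [Fintype.linearCombination_apply, Fin.sum_univ_castSucc, Nat.ne_of_lt (Fin.is_lt _),
      coeff_orbitPoly_self, hprod, -AlgHom.coe_pow]

theorem stmt7 (q m ν n : ℕ) (hq : IsPrimePow q) (hm : 2 ≤ m) (hqm : m - 1 ≤ q)
    (F K : Type*) [Field F] [Field K] [Algebra F K] [Fintype F] [Fintype K]
    (hF : Fintype.card F = q) (hK : Fintype.card K = q ^ m)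
    (z : K) (hz : Algebra.adjoin F ({z} : Set K) = ⊤)
    (hν : 1 ≤ ν) (hcop : Nat.gcd ν m = 1) (hn : 1 ≤ n) (hnm : n ≤ m - 1)
    (d : ℕ) (hd : d = ∑ i ∈ Finset.range n, q ^ (ν * i)) :
    ∃ φ : (Fin (n + 1) → F) →ₗ[F] K, Function.Injective φ ∧
      (fun v : Fin (n + 1) → F => Submodule.span F {φ v}) ''
        ({v : Fin (n + 1) → F | ∃ lam : F, v = fun i : Fin (n + 1) => lam ^ i.val} ∪
          {(fun i : Fin (n + 1) => if i.val = n then 1 else 0)}) =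
      {P : Submodule F K | ∃ a b : F, (a, b) ≠ 0 ∧
        P = Submodule.span F {(algebraMap F K a + algebraMap F K b * z) ^ d}} :=
  stmt7_general q m ν n F K hF hK z hz hcop hnm d hd
end

section
/- Let q be a prime power with q + 1 ≥ t, t ≥ 2. Let ℓ be a 2-dimensional F_q-subspace of F_{q^t} of order m. Then the set ℓ^{−1} = {⟨x^{−1}⟩_{F_q} : x ∈ ℓ \ {0}} is a normal rational curve of order m − 1 contained in an (m−1)-dimensional projective subspace of PG(t−1, q), where m divides t. -/
/-!
Write `ℓ = ⟨x, y⟩` and `l = y / x`; the order `m` of `ℓ` is the degree of the minimal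
polynomial `f` of `l` over `𝔽_q`, so `m ∣ t`. The points of `ℓ⁻¹` are `⟨x⁻¹⟩` and
`⟨(y - μ x)⁻¹⟩ = ⟨x⁻¹ (l - μ)⁻¹⟩` for `μ ∈ 𝔽_q`. With the Horner polynomials
`f_j = divX^[j+1] f` one has `(X - μ) ∑_j μ^j f_j = f - f(μ)`, and `f(μ) ≠ 0` because `f` is
irreducible of degree at least 2, so `(l - μ)⁻¹` is a nonzero multiple of `∑_j μ^j f_j(l)`.
Hence `v ↦ x⁻¹ ∑_j v_j f_j(l)` sends `(1, μ, …, μ^{m-1})` to a spanning vector of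
`⟨(y - μ x)⁻¹⟩` and `(0, …, 0, 1)` to `x⁻¹`, since `f_{m-1} = 1`; it is injective because the
`f_j` have distinct degrees below `deg f`.
-/

open Polynomial Finset Module Submodule

namespace Polynomial

variable {R : Type*} [CommRing R]

theorem coeff_divX_iterate (p : R[X]) (k n : ℕ) : (divX^[k] p).coeff n = p.coeff (n + k) := by
  induction k generalizing p with
  | zero => rfl
  | succ k ih => rw [Function.iterate_succ_apply, ih, coeff_divX]; rfl

theorem divX_iterate_natDegree (p : R[X]) : divX^[p.natDegree] p = C p.leadingCoeff := by
  ext n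
  rw [coeff_divX_iterate, coeff_C]
  split_ifs with hn
  · rw [hn, zero_add, leadingCoeff]
  · exact coeff_eq_zero_of_natDegree_lt (by omega)

theorem degree_divX_iterate_succ_lt (p : R[X]) (j : ℕ) :
    (divX^[j + 1] p).degree < p.natDegree := by
  rw [degree_lt_iff_coeff_zero]
  intro n hn
  rw [coeff_divX_iterate]
  exact coeff_eq_zero_of_natDegree_lt (by omega)

theorem X_sub_C_mul_sum_pow_smul_divX_iterate (μ : R) {N : ℕ} (p : R[X])
    (hN : p.natDegree ≤ N) :
    (X - C μ) * ∑ j ∈ range N, μ ^ j • divX^[j + 1] p = p - C (p.eval μ) := by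
  induction N generalizing p with
  | zero => rw [eq_C_of_natDegree_le_zero hN]; simp
  | succ N ih =>
    have hsum : ∑ j ∈ range (N + 1), μ ^ j • divX^[j + 1] p =
        C μ * ∑ j ∈ range N, μ ^ j • divX^[j + 1] (divX p) + divX p := by
      rw [sum_range_succ', mul_sum, pow_zero, one_smul, zero_add, Function.iterate_one]
      congr 1
      refine sum_congr rfl fun j _ => ?_
      rw [pow_succ', mul_smul, smul_eq_C_mul, Function.iterate_succ_apply]
    have ih' := ih (divX p) (by rw [natDegree_divX_eq_natDegree_tsub_one]; omega)
    have heval : p.eval μ = μ * (divX p).eval μ + p.coeff 0 := by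
      simpa only [eval_add, eval_mul, eval_X, eval_C] using
        congrArg (eval μ) (X_mul_divX_add p).symm
    rw [hsum, heval, C_add, C_mul]
    linear_combination C μ * ih' + X_mul_divX_add p

variable {F : Type*} [Field F]

theorem linearIndependent_divX_iterate {p : F[X]} (hp : p ≠ 0) :
    LinearIndependent F fun j : Fin p.natDegree => divX^[j + 1] p := by
  refine Fintype.linearIndependent_iff.mpr fun g hg i => ?_
  have hcoeff (i : Fin p.natDegree) :
      ∑ j, g j * p.coeff (p.natDegree - 1 - i + j + 1) = 0 := by
    simpa [finsetSum_coeff, coeff_divX_iterate] using congrArg (coeff · (p.natDegree - 1 - i)) hg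
  induction i using WellFoundedLT.induction with
  | ind i ih =>
    have hi := hcoeff i
    rw [sum_eq_single i, show p.natDegree - 1 - i + i + 1 = p.natDegree by omega] at hi
    · exact (mul_eq_zero.mp hi).resolve_right (leadingCoeff_ne_zero.mpr hp)
    · intro j _ hji
      rcases lt_or_gt_of_ne hji with hlt | hgt
      · rw [ih j hlt, zero_mul]
      · rw [coeff_eq_zero_of_natDegree_lt (by omega), mul_zero]
    · simp

end Polynomial

section MinpolyHorner

variable (F : Type*) {K : Type*} [Field F] [Field K] [Algebra F K]

noncomputable def minpolyHornerMap (l : K) : (Fin (minpoly F l).natDegree → F) →ₗ[F] K :=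
  Fintype.linearCombination F fun j => aeval l (divX^[j + 1] (minpoly F l))

variable {F} {l : K}

theorem minpolyHornerMap_injective (hl : IsIntegral F l) :
    Function.Injective (minpolyHornerMap F l) := by
  refine LinearIndependent.fintypeLinearCombination_injective <|
    (linearIndependent_divX_iterate (minpoly.ne_zero hl)).map (f := (aeval l).toLinearMap) ?_
  refine Submodule.disjoint_def.mpr fun p hp hpl => by_contra fun hp0 => ?_
  have hdeg : p.degree < (minpoly F l).natDegree :=
    mem_degreeLT.mp <| Submodule.span_le.mpr
      (Set.range_subset_iff.mpr fun j => mem_degreeLT.mpr (degree_divX_iterate_succ_lt _ _)) hp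
  have hle := minpoly.degree_le_of_ne_zero F l hp0 hpl
  rw [degree_eq_natDegree (minpoly.ne_zero hl)] at hle
  exact (hle.trans_lt hdeg).false

theorem sub_algebraMap_mul_minpolyHornerMap_pow (μ : F) :
    (l - algebraMap F K μ) * minpolyHornerMap F l (fun i => μ ^ i.val) =
      -algebraMap F K ((minpoly F l).eval μ) := by
  have h := congrArg (aeval l) (X_sub_C_mul_sum_pow_smul_divX_iterate μ (minpoly F l) le_rfl)
  simp only [map_mul, map_sum, map_sub, map_smul, aeval_X, aeval_C, minpoly.aeval, zero_sub] at h
  rw [minpolyHornerMap, Fintype.linearCombination_apply,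
    Fin.sum_univ_eq_sum_range (fun j => μ ^ j • aeval l (divX^[j + 1] (minpoly F l))), h]

theorem minpolyHornerMap_pow (hl : l ∉ (algebraMap F K).range) (μ : F) :
    minpolyHornerMap F l (fun i => μ ^ i.val) =
      (-(minpoly F l).eval μ) • (l - algebraMap F K μ)⁻¹ := by
  have hlμ : l - algebraMap F K μ ≠ 0 := fun h => hl ⟨μ, (sub_eq_zero.mp h).symm⟩
  rw [eq_comm, Algebra.smul_def, map_neg, ← sub_algebraMap_mul_minpolyHornerMap_pow, mul_comm,
    inv_mul_cancel_left₀ hlμ]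

theorem minpolyHornerMap_single_last (hl : IsIntegral F l) :
    minpolyHornerMap F l (fun i => if i.val = (minpoly F l).natDegree - 1 then 1 else 0) = 1 := by
  have hpos := minpoly.natDegree_pos hl
  rw [minpolyHornerMap, Fintype.linearCombination_apply,
    sum_eq_single ⟨(minpoly F l).natDegree - 1, by omega⟩]
  · rw [if_pos rfl, one_smul, Nat.sub_add_cancel hpos, divX_iterate_natDegree,
      (minpoly.monic hl).leadingCoeff, map_one, aeval_one]
  · intro j _ hj
    rw [if_neg (fun h => hj (Fin.ext h)), zero_smul]
  · simp

theorem minpoly.eval_ne_zero_of_notMem_range (hl : IsIntegral F l)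
    (hlF : l ∉ (algebraMap F K).range) (μ : F) :
    (minpoly F l).eval μ ≠ 0 := fun h =>
  hlF <| minpoly.degree_eq_one_iff.mp <|
    degree_eq_one_of_irreducible_of_root (minpoly.irreducible hl) h

end MinpolyHorner

theorem finrank_eq_of_card_eq_pow {F V : Type*} [Field F] [Fintype F] [AddCommGroup V] [Module F V]
    [Fintype V] {q t : ℕ} (hF : Fintype.card F = q) (hV : Fintype.card V = q ^ t) :
    finrank F V = t := by
  have h := card_eq_pow_finrank (K := F) (V := V)
  rw [hF, hV] at h
  exact Nat.pow_right_injective (hF ▸ Fintype.one_lt_card) h.symm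

section Pair

variable {F V : Type*} [Field F] [AddCommGroup V] [Module F V]

theorem Submodule.exists_linearIndependent_pair_span_eq {ℓ : Submodule F V}
    (hℓ : finrank F ℓ = 2) : ∃ x y : V, LinearIndependent F ![x, y] ∧ span F {x, y} = ℓ := by
  have : Module.Finite F ℓ := Module.finite_of_finrank_eq_succ hℓ
  let b := finBasisOfFinrankEq F ℓ hℓ
  have hb : ![(b 0 : V), b 1] = ℓ.subtype ∘ b := by ext i; fin_cases i <;> rfl
  refine ⟨b 0, b 1, hb ▸ b.linearIndependent.map' _ ℓ.ker_subtype, ?_⟩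
  rw [← Matrix.range_cons_cons_empty _ _ ![], hb, Set.range_comp, span_image, b.span_eq,
    map_subtype_top]

theorem exists_smul_eq_or_smul_sub_smul_eq {x y z : V} (hz : z ∈ span F {x, y}) (hz0 : z ≠ 0) :
    ∃ c : F, c ≠ 0 ∧ (z = c • x ∨ ∃ μ : F, z = c • (y - μ • x)) := by
  obtain ⟨a, b, rfl⟩ := mem_span_pair.mp hz
  by_cases hb : b = 0
  · subst hb
    refine ⟨a, fun ha => hz0 (by simp [ha]), Or.inl (by simp)⟩
  · refine ⟨b, hb, Or.inr ⟨-(a / b), ?_⟩⟩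
    rw [smul_sub, smul_smul, mul_neg, mul_div_cancel₀ a hb, neg_smul, sub_neg_eq_add, add_comm]

end Pair

section Inverse

variable {F K : Type*} [Field F] [Field K] [Algebra F K] {x y : K}

theorem LinearIndependent.div_notMem_range_algebraMap (hxy : LinearIndependent F ![x, y]) :
    y / x ∉ (algebraMap F K).range := by
  rintro ⟨c, hc⟩
  have hx0 : x ≠ 0 := by simpa using hxy.ne_zero 0
  exact (LinearIndependent.pair_iff' hx0).mp hxy c
    (by rw [Algebra.smul_def, hc, div_mul_cancel₀ y hx0])

theorem LinearIndependent.setOf_span_inv_eq (hxy : LinearIndependent F ![x, y]) :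
    {P : Submodule F K | ∃ z ∈ span F {x, y}, z ≠ 0 ∧ P = span F {z⁻¹}} =
      Set.range (fun μ : F => span F {(y - μ • x)⁻¹}) ∪ {span F {x⁻¹}} := by
  have hx0 : x ≠ 0 := by simpa using hxy.ne_zero 0
  have hspan (c : F) (z : K) (hc : c ≠ 0) : span F {(c • z)⁻¹} = span F {z⁻¹} := by
    rw [smul_inv₀, span_singleton_smul_eq (inv_ne_zero hc).isUnit]
  ext P
  simp only [Set.mem_ofPred_eq, Set.mem_union, Set.mem_range, Set.mem_singleton_iff]
  constructor
  · rintro ⟨z, hz, hz0, rfl⟩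
    obtain ⟨c, hc, rfl | ⟨μ, rfl⟩⟩ := exists_smul_eq_or_smul_sub_smul_eq hz hz0
    · exact Or.inr (hspan c x hc)
    · exact Or.inl ⟨μ, (hspan c _ hc).symm⟩
  · rintro (⟨μ, rfl⟩ | rfl)
    · refine ⟨y - μ • x, sub_mem (subset_span (by simp)) (smul_mem _ _ (subset_span (by simp))),
        fun h => (LinearIndependent.pair_iff' hx0).mp hxy μ (sub_eq_zero.mp h).symm, rfl⟩
    · exact ⟨x, subset_span (by simp), hx0, rfl⟩

end Inverse

theorem stmt8_general (q t m : ℕ)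
    (F K : Type*) [Field F] [Field K] [Algebra F K] [Fintype F] [Fintype K]
    (hF : Fintype.card F = q) (hK : Fintype.card K = q ^ t)
    (ℓ : Submodule F K) (hdim : Module.finrank F ℓ = 2)
    (horder : ∀ x y : K, x ∈ ℓ → y ∈ ℓ → LinearIndependent F ![x, y] →
      Module.finrank F (Algebra.adjoin F ({y / x} : Set K)) = m) :
    m ∣ t ∧
    ∃ φ : (Fin m → F) →ₗ[F] K, Function.Injective φ ∧
      (fun v : Fin m → F => Submodule.span F {φ v}) ''
        ({v : Fin m → F | ∃ lam : F, v = fun i : Fin m => lam ^ i.val} ∪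
          {fun i : Fin m => if i.val = m - 1 then 1 else 0}) =
      {P : Submodule F K | ∃ x ∈ ℓ, x ≠ 0 ∧ P = Submodule.span F ({x⁻¹} : Set K)} := by
  obtain ⟨x, y, hxy, rfl⟩ := ℓ.exists_linearIndependent_pair_span_eq hdim
  have hx0 : x ≠ 0 := by simpa using hxy.ne_zero 0
  have hl : IsIntegral F (y / x) := .of_finite F _
  have hlF := hxy.div_notMem_range_algebraMap
  obtain rfl : (minpoly F (y / x)).natDegree = m := by
    rw [← horder x y (subset_span (by simp)) (subset_span (by simp)) hxy]
    exact (Algebra.adjoin.powerBasis hl).finrank.symm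
  refine ⟨finrank_eq_of_card_eq_pow hF hK ▸ minpoly.degree_dvd hl,
    LinearMap.mulLeft F x⁻¹ ∘ₗ minpolyHornerMap F (y / x),
    (mul_right_injective₀ (inv_ne_zero hx0)).comp (minpolyHornerMap_injective hl), ?_⟩
  have hcurve : {v | ∃ μ : F, v = fun i : Fin (minpoly F (y / x)).natDegree => μ ^ i.val} =
      Set.range fun μ : F => fun i => μ ^ i.val := by
    ext v; simp [eq_comm]
  rw [hxy.setOf_span_inv_eq, Set.image_union, Set.image_singleton, hcurve, ← Set.range_comp]
  congr 1
  · refine congrArg Set.range (funext fun μ => ?_)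
    have hxl : x * (y / x - algebraMap F K μ) = y - μ • x := by
      rw [mul_sub, mul_div_cancel₀ y hx0, Algebra.smul_def, mul_comm]
    have hfμ := neg_ne_zero.mpr (minpoly.eval_ne_zero_of_notMem_range hl hlF μ)
    rw [Function.comp_apply, LinearMap.comp_apply, LinearMap.mulLeft_apply,
      minpolyHornerMap_pow hlF, mul_smul_comm, ← mul_inv, hxl, span_singleton_smul_eq hfμ.isUnit]
  · simp [minpolyHornerMap_single_last hl]

theorem stmt8 (q t m : ℕ) (hq : IsPrimePow q) (ht : 2 ≤ t) (hqt : t ≤ q + 1)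
    (F K : Type*) [Field F] [Field K] [Algebra F K] [Fintype F] [Fintype K]
    (hF : Fintype.card F = q) (hK : Fintype.card K = q ^ t)
    (ℓ : Submodule F K) (hdim : Module.finrank F ℓ = 2)
    (horder : ∀ x y : K, x ∈ ℓ → y ∈ ℓ → LinearIndependent F ![x, y] →
      Module.finrank F (Algebra.adjoin F ({y / x} : Set K)) = m) :
    m ∣ t ∧
    ∃ φ : (Fin m → F) →ₗ[F] K, Function.Injective φ ∧
      (fun v : Fin m → F => Submodule.span F {φ v}) ''
        ({v : Fin m → F | ∃ lam : F, v = fun i : Fin m => lam ^ i.val} ∪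
          {fun i : Fin m => if i.val = m - 1 then 1 else 0}) =
      {P : Submodule F K | ∃ x ∈ ℓ, x ≠ 0 ∧ P = Submodule.span F ({x⁻¹} : Set K)} :=
  stmt8_general q t m F K hF hK ℓ hdim horder
end

section
/- Let q be a prime power and t ≥ 2. For each k ∈ F_{q^t} with N(k) = 1 (norm over F_q) and each h ∈ {0, 1, …, t−1}, let S_{h,k} = {⟨(z, k z^{q^h})⟩_{F_q} : z ∈ F_{q^t}^*} ⊆ PG(2t−1, q). Then for each fixed h, the family S_h = {S_{h,k} : N(k) = 1} partitions the hypersurface Q = {⟨(a,b)⟩_{F_q} : (a,b) ∈ F_{q^t}² \ {0}, N(a) = N(b)}: every point of Q lies in exactly one S_{h,k}, and each S_{h,k} is a (t−1)-dimensional projective subspace. -/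
theorem stmt9 (q t : ℕ) (hq : IsPrimePow q) (ht : 2 ≤ t)
    (F K : Type*) [Field F] [Field K] [Algebra F K] [Fintype F] [Fintype K]
    (hF : Fintype.card F = q) (hK : Fintype.card K = q ^ t)
    (S : ℕ → K → Set (Submodule F (K × K)))
    (hS : ∀ h k, S h k =
      {P | ∃ z : K, z ≠ 0 ∧ P = Submodule.span F {(z, k * z ^ q ^ h)}})
    (Q : Set (Submodule F (K × K)))
    (hQ : Q = {P | ∃ a b : K, (a, b) ≠ (0, 0) ∧
      Algebra.norm F a = Algebra.norm F b ∧ P = Submodule.span F {(a, b)}}) :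
    ∀ h < t,
      (∀ P ∈ Q, ∃! k : K, Algebra.norm F k = 1 ∧ P ∈ S h k) ∧
      (∀ k : K, Algebra.norm F k = 1 →
        ∃ W : Submodule F (K × K), Module.finrank F W = t ∧
          S h k = {P | ∃ v ∈ W, v ≠ 0 ∧ P = Submodule.span F {v}}) := by
  obtain ⟨p, n, hp, hn, rfl⟩ := hq
  haveI hpfact : Fact p.Prime := ⟨hp.nat_prime⟩
  have hq1 : 1 < p ^ n := Nat.one_lt_pow hn.ne' hp.nat_prime.one_lt
  haveI : Module.Finite F K := Module.finite_iff_finite.mpr inferInstance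
  -- characteristic facts
  haveI hcharF : CharP F p := by
    have : CharP F (ringChar F) := ringChar.charP F
    obtain ⟨m, hm⟩ := FiniteField.card F (ringChar F)
    rw [hF] at hm
    have hr : ringChar F = p := by
      have h1 : (ringChar F) ∣ p ^ n := hm.2 ▸ dvd_pow_self _ (PNat.pos m).ne'
      have h2 := (Nat.prime_dvd_prime_iff_eq hm.1 hp.nat_prime).mp
        ((Nat.Prime.dvd_of_dvd_pow hm.1) h1)
      exact h2
    rwa [hr] at this
  haveI hcharK : CharP K p :=
    charP_of_injective_algebraMap (algebraMap F K).injective p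
  -- smul over F is multiplication by algebraMap
  have hfix : ∀ (c : F) (m : ℕ), (algebraMap F K c) ^ (p ^ n) ^ m = algebraMap F K c := by
    intro c m
    rw [← map_pow]
    congr 1
    have := FiniteField.pow_card_pow (K := F) m c
    rwa [hF] at this
  -- finrank
  have hfr : Module.finrank F K = t := by
    have hcard := Module.card_eq_pow_finrank (K := F) (V := K)
    rw [hF, hK] at hcard
    exact (Nat.pow_right_injective hq1 hcard.symm)
  intro h hht
  set N := (p ^ n) ^ h with hN
  -- additivity of x ↦ x ^ N
  have hadd : ∀ x y : K, (x + y) ^ N = x ^ N + y ^ N := by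
    intro x y
    rw [hN, ← pow_mul, add_pow_char_pow, pow_mul]
  have hsmul : ∀ (c : F) (z : K), (c • z) ^ N = c • z ^ N := by
    intro c z
    rw [Algebra.smul_def, Algebra.smul_def, mul_pow, hfix]
  -- norm facts
  have hnormpow : ∀ a : K, Algebra.norm F (a ^ N) = Algebra.norm F a := by
    intro a
    rw [map_pow]
    have := FiniteField.pow_card_pow (K := F) h (Algebra.norm F a)
    rwa [hF] at this
  have hnormzero : ∀ a : K, Algebra.norm F a = 0 ↔ a = 0 := fun a =>
    Algebra.norm_eq_zero_iff
  -- span facts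
  have hspan : ∀ v w : K × K, w ≠ 0 →
      Submodule.span F {v} = Submodule.span F {w} → ∃ c : F, c ≠ 0 ∧ c • v = w := by
    intro v w hw hvw
    have : w ∈ Submodule.span F {v} := by
      rw [hvw]; exact Submodule.mem_span_singleton_self w
    obtain ⟨c, hc⟩ := Submodule.mem_span_singleton.mp this
    refine ⟨c, ?_, hc⟩
    rintro rfl
    rw [zero_smul] at hc
    exact hw hc.symm
  constructor
  · -- existence and uniqueness
    intro P hP
    rw [hQ] at hP
    obtain ⟨a, b, hab, hnorm, rfl⟩ := hP
    have ha : a ≠ 0 := by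
      rintro rfl
      have : Algebra.norm F b = 0 := by rw [← hnorm]; exact (hnormzero 0).mpr rfl
      rw [hnormzero] at this
      subst this
      exact hab rfl
    have hb : b ≠ 0 := by
      rintro rfl
      rw [(hnormzero 0).mpr rfl] at hnorm
      rw [hnormzero] at hnorm
      subst hnorm
      exact hab rfl
    have haN : a ^ N ≠ 0 := pow_ne_zero _ ha
    refine ⟨b / a ^ N, ⟨?_, ?_⟩, ?_⟩
    · have h1 : (b / a ^ N) * a ^ N = b := div_mul_cancel₀ b haN
      have h2 : Algebra.norm F (b / a ^ N) * Algebra.norm F (a ^ N) = Algebra.norm F b := by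
        rw [← map_mul, h1]
      rw [hnormpow, ← hnorm] at h2
      have hna : Algebra.norm F a ≠ 0 := fun hc => ha ((hnormzero a).mp hc)
      field_simp at h2
      exact h2
    · rw [hS]
      exact ⟨a, ha, by rw [div_mul_cancel₀ b haN]⟩
    · intro k' ⟨hk'norm, hk'mem⟩
      rw [hS] at hk'mem
      obtain ⟨z, hz, hzspan⟩ := hk'mem
      have hzkN : (z, k' * z ^ N) ≠ (0 : K × K) := by
        intro hc
        exact hz (congrArg Prod.fst hc)
      obtain ⟨c, hc0, hc⟩ := hspan _ _ hzkN hzspan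
      have hc1 : c • a = z := congrArg Prod.fst hc
      have hc2 : c • b = k' * z ^ N := congrArg Prod.snd hc
      rw [← hc1, hsmul] at hc2
      have hcK : algebraMap F K c ≠ 0 := by
        simpa using hc0
      rw [Algebra.smul_def, Algebra.smul_def] at hc2
      have : b = k' * a ^ N := by
        exact mul_left_cancel₀ hcK (by rw [hc2]; ring)
      rw [this, mul_div_assoc, div_self haN, mul_one]
  · -- each S h k is the projectivization of a t-dimensional subspace
    intro k hk
    let ψ : K →ₗ[F] K × K :=
      { toFun := fun z => (z, k * z ^ N)
        map_add' := fun x y => by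
          simp only [hadd, mul_add, Prod.mk_add_mk]
        map_smul' := fun c z => by
          simp only [RingHom.id_apply, Prod.smul_mk, hsmul]
          rw [Algebra.smul_def c (z ^ N), Algebra.smul_def c (k * z ^ N)]
          ring_nf }
    have hψinj : Function.Injective ψ := by
      intro x y hxy
      exact congrArg Prod.fst hxy
    refine ⟨LinearMap.range ψ, ?_, ?_⟩
    · rw [LinearMap.finrank_range_of_inj hψinj, hfr]
    · rw [hS]
      ext P
      constructor
      · rintro ⟨z, hz, rfl⟩
        refine ⟨ψ z, ⟨z, rfl⟩, ?_, rfl⟩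
        intro hc
        exact hz (congrArg Prod.fst hc)
      · rintro ⟨v, ⟨z, rfl⟩, hv, rfl⟩
        refine ⟨z, ?_, rfl⟩
        rintro rfl
        apply hv
        show ((0 : K), k * (0 : K) ^ N) = 0
        have hN0 : N ≠ 0 := pow_ne_zero _ (by omega)
        rw [zero_pow hN0, mul_zero]
        rfl
end

section
/- Let q be a prime power, t ≥ 2, and P = ⟨(1,1)⟩_{F_q} ∈ PG(2t−1, q) (projective space of F_{q^t}²). For y ∈ F_{q^t} \ F_q and h, h′ ∈ {0, 1, …, t−1}, define Q_{y,h} = ⟨(y, y^{q^h})⟩_{F_q}. Then Q_{y,h} = Q_{y′,h′} if and only if ⟨y⟩_{F_q} = ⟨y′⟩_{F_q} and [F_q(y) : F_q] divides h − h′. -/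
/-!
Multiplication by a scalar of `F` commutes with `x ↦ x ^ q ^ h`, so the two points coincide
exactly when `⟨y⟩ = ⟨y'⟩` and `y ^ q ^ h = y ^ q ^ h'`. The Frobenius `x ↦ x ^ q` of `F(y)/F`
generates its Galois group, of order `[F(y) : F]`, and an automorphism of `F(y)` is determined
by its value at `y`; hence `y ^ q ^ h = y ^ q ^ h'` iff `h ≡ h' [MOD [F(y) : F]]`.
-/

open IntermediateField FiniteField

theorem smul_pow_card_pow {F R : Type*} [Field F] [Fintype F] [CommRing R] [Algebra F R]
    (c : F) (x : R) (n : ℕ) :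
    (c • x) ^ Fintype.card F ^ n = c • x ^ Fintype.card F ^ n := by
  rw [Algebra.smul_def, Algebra.smul_def, mul_pow, ← map_pow, pow_card_pow]

theorem pow_card_pow_eq_pow_card_pow_iff_modEq {F K : Type*} [Field F] [Fintype F] [Field K]
    [Algebra F K] {y : K} (hy : IsIntegral F y) (m n : ℕ) :
    y ^ Fintype.card F ^ m = y ^ Fintype.card F ^ n ↔ m ≡ n [MOD Module.finrank F F⟮y⟯] := by
  have : FiniteDimensional F F⟮y⟯ := adjoin.finiteDimensional hy
  have : Finite F⟮y⟯ := Module.finite_of_finite F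
  rw [← orderOf_frobeniusAlgEquivOfAlgebraic, ← pow_eq_pow_iff_modEq]
  constructor
  · intro h
    refine AlgEquiv.coe_toAlgHom_injective (algHom_ext_of_eq_adjoin _ rfl ?_)
    rintro x rfl
    apply Subtype.ext
    simp [AlgEquiv.coe_pow, coe_frobeniusAlgEquivOfAlgebraic_iterate, h]
  · intro h
    have := congrArg Subtype.val congr($h (AdjoinSimple.gen F y))
    simpa [AlgEquiv.coe_pow, coe_frobeniusAlgEquivOfAlgebraic_iterate] using this

theorem span_pair_pow_card_pow_eq_iff {F K : Type*} [Field F] [Fintype F] [Field K]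
    [Algebra F K] (y y' : K) (m n : ℕ) :
    Submodule.span F {((y, y ^ Fintype.card F ^ m) : K × K)} =
        Submodule.span F {((y', y' ^ Fintype.card F ^ n) : K × K)} ↔
      Submodule.span F ({y} : Set K) = Submodule.span F ({y'} : Set K) ∧
        y ^ Fintype.card F ^ m = y ^ Fintype.card F ^ n := by
  simp only [Submodule.span_singleton_eq_span_singleton, Prod.smul_mk, Prod.mk.injEq]
  constructor
  · rintro ⟨c, rfl, hc⟩
    rw [Units.smul_def, Units.smul_def, smul_pow_card_pow, ← Units.smul_def, ← Units.smul_def,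
      smul_left_cancel_iff] at hc
    exact ⟨⟨c, rfl⟩, hc⟩
  · rintro ⟨⟨c, rfl⟩, h⟩
    refine ⟨c, rfl, ?_⟩
    rw [Units.smul_def, Units.smul_def, smul_pow_card_pow, h]

theorem stmt10_general (q : ℕ)
    (F K : Type*) [Field F] [Field K] [Algebra F K] [Fintype F] [Fintype K]
    (hF : Fintype.card F = q)
    (y y' : K)
    (h h' : ℕ) :
    Submodule.span F {((y, y ^ q ^ h) : K × K)} =
      Submodule.span F {((y', y' ^ q ^ h') : K × K)} ↔
    (Submodule.span F ({y} : Set K) = Submodule.span F ({y'} : Set K) ∧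
      (Module.finrank F (Algebra.adjoin F ({y} : Set K)) : ℤ) ∣ (h : ℤ) - (h' : ℤ)) := by
  subst hF
  have hyint : IsIntegral F y := .of_finite F y
  have hfinrank : Module.finrank F (Algebra.adjoin F ({y} : Set K)) = Module.finrank F F⟮y⟯ := by
    rw [← adjoin_simple_toSubalgebra_of_isAlgebraic hyint.isAlgebraic]; rfl
  rw [span_pair_pow_card_pow_eq_iff, pow_card_pow_eq_pow_card_pow_iff_modEq hyint, hfinrank,
    Nat.ModEq.comm, Nat.modEq_iff_dvd]

theorem stmt10 (q t : ℕ) (hq : IsPrimePow q) (ht : 2 ≤ t)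
    (F K : Type*) [Field F] [Field K] [Algebra F K] [Fintype F] [Fintype K]
    (hF : Fintype.card F = q) (hK : Fintype.card K = q ^ t)
    (y y' : K) (hy : y ∉ Set.range (algebraMap F K)) (hy' : y' ∉ Set.range (algebraMap F K))
    (h h' : ℕ) (hh : h < t) (hh' : h' < t) :
    Submodule.span F {((y, y ^ q ^ h) : K × K)} =
      Submodule.span F {((y', y' ^ q ^ h') : K × K)} ↔
    (Submodule.span F ({y} : Set K) = Submodule.span F ({y'} : Set K) ∧
      (Module.finrank F (Algebra.adjoin F ({y} : Set K)) : ℤ) ∣ (h : ℤ) - (h' : ℤ)) :=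
  stmt10_general q F K hF y y' h h'
end

section
/- Let q ≥ t ≥ 2 with q a prime power. The number of projective lines through the point P = ⟨(1,1)⟩_{F_q} that are entirely contained in the set Q = {⟨(a,b)⟩_{F_q} : a, b ∈ F_{q^t}^*, N(a) = N(b)} ⊆ PG(2t−1, q) equals (∑_{y ∈ F_{q^t} \ F_q} [F_q(y) : F_q]) / (q(q−1)). -/
/-!
A line through `⟨(1,1)⟩` is spanned by `(1,1)` and some `(y, w)` with `y ∉ F`. The norm condition
on the vectors `(a - y, a - w)`, `a ∈ F`, says that the monic degree-`t` polynomials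
`∏ σ, (X - σ y)` and `∏ σ, (X - σ w)` agree at the `q ≥ t` points of `F`, so they coincide and
`w` is a conjugate of `y`. Conversely, `(1,1)` and `(y, σ y)` span a plane inside the graph of
`σ`, which lies in `Q`. Hence the lines correspond to the conjugate pairs `(y, w)` with `y ∉ F`,
each line arising from the `q² - q` vectors of it whose first coordinate is outside `F`, while
`y` has `[F(y) : F]` conjugates.
-/
open Polynomial

section Conjugates

variable {F K : Type*} [Field F] [Field K] [Algebra F K] [FiniteDimensional F K] [IsGalois F K]

theorem eval_prod_X_sub_C_algEquiv_apply (a : F) (y : K) :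
    (∏ σ : K ≃ₐ[F] K, (X - C (σ y))).eval (algebraMap F K a) =
      algebraMap F K (Algebra.norm F (algebraMap F K a - y)) := by
  simp [eval_prod, Algebra.norm_eq_prod_automorphisms]

theorem degree_prod_X_sub_C_algEquiv_apply (y : K) :
    (∏ σ : K ≃ₐ[F] K, (X - C (σ y))).degree = (Module.finrank F K : WithBot ℕ) := by
  simp [degree_prod, ← IsGalois.card_aut_eq_finrank]

theorem isConjRoot_of_norm_sub_eq [Fintype F] (hcard : Module.finrank F K ≤ Fintype.card F)
    {y w : K} (h : ∀ a : F, Algebra.norm F (algebraMap F K a - y) =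
      Algebra.norm F (algebraMap F K a - w)) : IsConjRoot F y w := by
  classical
  have hprod : ∏ σ : K ≃ₐ[F] K, (X - C (σ y)) = ∏ σ : K ≃ₐ[F] K, (X - C (σ w)) := by
    refine eq_of_degree_le_of_eval_finset_eq (Finset.univ.image (algebraMap F K)) ?_ ?_ ?_ ?_
    · rw [degree_prod_X_sub_C_algEquiv_apply,
        Finset.card_image_of_injective _ (algebraMap F K).injective]
      exact_mod_cast hcard
    · rw [degree_prod_X_sub_C_algEquiv_apply, degree_prod_X_sub_C_algEquiv_apply]
    · rw [(monic_prod_X_sub_C _ _).leadingCoeff, (monic_prod_X_sub_C _ _).leadingCoeff]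
    · simp only [Finset.mem_image, Finset.mem_univ, true_and]
      rintro _ ⟨a, rfl⟩
      rw [eval_prod_X_sub_C_algEquiv_apply, eval_prod_X_sub_C_algEquiv_apply, h]
  have hw : (∏ σ : K ≃ₐ[F] K, (X - C (σ y))).eval w = 0 := by
    rw [hprod, eval_prod]
    exact Finset.prod_eq_zero (Finset.mem_univ 1) (by simp)
  rw [eval_prod, Finset.prod_eq_zero_iff] at hw
  obtain ⟨σ, -, hσ⟩ := hw
  rw [eval_sub, eval_X, eval_C, sub_eq_zero] at hσ
  exact (isConjRoot_iff_exists_algEquiv.2 ⟨σ, hσ.symm⟩).symm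

theorem card_filter_isConjRoot [Fintype K] [DecidableEq K] (y : K) :
    (Finset.univ.filter (IsConjRoot F y)).card = Module.finrank F (Algebra.adjoin F {y}) := by
  have hy : IsIntegral F y := .of_finite F y
  rw [(Algebra.adjoin.powerBasis' hy).finrank, Algebra.adjoin.powerBasis'_dim,
    ← card_rootSet_eq_natDegree (K := K) (Algebra.IsSeparable.isSeparable F y)
      (Normal.splits inferInstance y), ← Set.toFinset_card]
  congr 1
  ext w
  simp [isConjRoot_iff_mem_minpoly_rootSet hy]

end Conjugates

section NormLines

variable (F K : Type*) [Field F] [Field K] [Algebra F K]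

def normLines : Set (Submodule F (K × K)) :=
  {W | Module.finrank F W = 2 ∧ ((1 : K), (1 : K)) ∈ W ∧
    ∀ v ∈ W, v ≠ 0 → v.1 ≠ 0 ∧ v.2 ≠ 0 ∧ Algebra.norm F v.1 = Algebra.norm F v.2}

variable {F K}

theorem finrank_span_one_one_pair {v : K × K} (hv : v.1 ∉ Set.range (algebraMap F K)) :
    Module.finrank F (Submodule.span F {((1 : K), (1 : K)), v}) = 2 := by
  have hind : LinearIndependent F ![((1 : K), (1 : K)), v] := by
    refine (LinearIndependent.pair_iff' (by simp)).2 fun a ha => hv ⟨a, ?_⟩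
    simp [← ha, Algebra.algebraMap_eq_smul_one]
  have h := finrank_span_eq_card hind
  rwa [Matrix.range_cons_cons_empty, Fintype.card_fin] at h

theorem span_one_one_pair_le_graph (σ : K ≃ₐ[F] K) (y : K) :
    Submodule.span F {((1 : K), (1 : K)), (y, σ y)} ≤ LinearMap.graph σ.toLinearMap := by
  rw [Submodule.span_le, Set.insert_subset_iff, Set.singleton_subset_iff]
  simp [LinearMap.mem_graph_iff]

theorem span_one_one_pair_algEquiv_mem_normLines {y : K} (hy : y ∉ Set.range (algebraMap F K))
    (σ : K ≃ₐ[F] K) : Submodule.span F {((1 : K), (1 : K)), (y, σ y)} ∈ normLines F K := by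
  refine ⟨finrank_span_one_one_pair hy, Submodule.subset_span (Set.mem_insert _ _),
    fun v hv hv0 => ?_⟩
  have hσv : v.2 = σ v.1 := (LinearMap.mem_graph_iff _ _).1 (span_one_one_pair_le_graph σ y hv)
  have hv1 : v.1 ≠ 0 := fun h => hv0 (Prod.ext h (by simp [hσv, h]))
  exact ⟨hv1, by simpa [hσv] using hv1, by rw [hσv, Algebra.norm_eq_of_algEquiv]⟩

variable {W : Submodule F (K × K)}

theorem eq_of_fst_eq_of_mem_normLines (hW : W ∈ normLines F K) {v w : K × K} (hv : v ∈ W)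
    (hw : w ∈ W) (h : v.1 = w.1) : v = w := by
  by_contra hne
  exact (hW.2.2 (v - w) (W.sub_mem hv hw) (sub_ne_zero.2 hne)).1 (by simp [h])

theorem isConjRoot_of_mem_normLines [Fintype F] [FiniteDimensional F K] [IsGalois F K]
    (hcard : Module.finrank F K ≤ Fintype.card F) (hW : W ∈ normLines F K) {v : K × K}
    (hv : v ∈ W) (hv1 : v.1 ∉ Set.range (algebraMap F K)) : IsConjRoot F v.1 v.2 := by
  refine isConjRoot_of_norm_sub_eq hcard fun a => ?_
  have hmem : a • ((1 : K), (1 : K)) - v ∈ W := W.sub_mem (W.smul_mem a hW.2.1) hv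
  have hne : a • ((1 : K), (1 : K)) - v ≠ 0 := by
    rw [sub_ne_zero]
    rintro rfl
    exact hv1 ⟨a, by simp [Algebra.algebraMap_eq_smul_one]⟩
  simpa [Algebra.algebraMap_eq_smul_one] using (hW.2.2 _ hmem hne).2.2

theorem span_one_one_pair_eq_of_mem_normLines (hW : W ∈ normLines F K) {v : K × K} (hv : v ∈ W)
    (hv1 : v.1 ∉ Set.range (algebraMap F K)) : Submodule.span F {((1 : K), (1 : K)), v} = W := by
  have : FiniteDimensional F W := Module.finite_of_finrank_pos (by rw [hW.1]; norm_num)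
  refine Submodule.eq_of_le_of_finrank_eq ?_ (by rw [finrank_span_one_one_pair hv1, hW.1])
  rw [Submodule.span_le, Set.insert_subset_iff, Set.singleton_subset_iff]
  exact ⟨hW.2.1, hv⟩

open scoped Classical in
theorem card_filter_mem_fst_mem_range [Fintype F] [Fintype K] (hW : W ∈ normLines F K) :
    (Finset.univ.filter fun v : K × K => v ∈ W ∧ v.1 ∈ Set.range (algebraMap F K)).card =
      Fintype.card F := by
  have himage : (Finset.univ.filter fun v : K × K => v ∈ W ∧ v.1 ∈ Set.range (algebraMap F K)) =
      Finset.univ.image fun a : F => a • ((1 : K), (1 : K)) := by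
    ext v
    simp only [Finset.mem_filter, Finset.mem_univ, true_and, Finset.mem_image]
    constructor
    · rintro ⟨hv, a, ha⟩
      refine ⟨a, eq_of_fst_eq_of_mem_normLines hW (W.smul_mem a hW.2.1) hv ?_⟩
      simp [← ha, Algebra.algebraMap_eq_smul_one]
    · rintro ⟨a, rfl⟩
      exact ⟨W.smul_mem a hW.2.1, a, by simp [Algebra.algebraMap_eq_smul_one]⟩
  rw [himage, Finset.card_image_of_injective _ (smul_left_injective F (by simp)),
    Finset.card_univ]

end NormLines

section Counting

open scoped Classical

variable (F K : Type*) [Field F] [Field K] [Algebra F K] [Fintype K]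

noncomputable def conjugatePairs : Finset (K × K) :=
  Finset.univ.filter fun v => v.1 ∉ Set.range (algebraMap F K) ∧ IsConjRoot F v.1 v.2

variable {F K}

theorem card_conjugatePairs [FiniteDimensional F K] [IsGalois F K] :
    (conjugatePairs F K).card =
      ∑ y ∈ Finset.univ.filter (fun y : K => y ∉ Set.range (algebraMap F K)),
        Module.finrank F (Algebra.adjoin F ({y} : Set K)) := by
  rw [conjugatePairs, Finset.card_filter, Fintype.sum_prod_type, Finset.sum_filter]
  refine Finset.sum_congr rfl fun y _ => ?_
  split_ifs with hy
  · simp [hy]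
  · simp [hy, card_filter_isConjRoot]

theorem card_filter_mem_fst_notMem_range [Fintype F] {W : Submodule F (K × K)}
    (hW : W ∈ normLines F K) :
    (Finset.univ.filter fun v : K × K => v ∈ W ∧ v.1 ∉ Set.range (algebraMap F K)).card =
      Fintype.card F * (Fintype.card F - 1) := by
  have hcardW : (Finset.univ.filter fun v : K × K => v ∈ W).card = Fintype.card F ^ 2 := by
    rw [← hW.1, ← Module.card_eq_pow_finrank, Fintype.card_subtype]
  have h := Finset.card_filter_add_card_filter_not (s := Finset.univ.filter fun v : K × K => v ∈ W)
    (fun v => v.1 ∈ Set.range (algebraMap F K))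
  rw [Finset.filter_filter, Finset.filter_filter, card_filter_mem_fst_mem_range hW, hcardW] at h
  rw [Nat.mul_sub_one, ← sq]
  omega

theorem filter_conjugatePairs_span_eq [Fintype F] [FiniteDimensional F K] [IsGalois F K]
    (hcard : Module.finrank F K ≤ Fintype.card F) {W : Submodule F (K × K)}
    (hW : W ∈ normLines F K) :
    (conjugatePairs F K).filter (fun v => Submodule.span F {((1 : K), (1 : K)), v} = W) =
      Finset.univ.filter fun v : K × K => v ∈ W ∧ v.1 ∉ Set.range (algebraMap F K) := by
  ext v
  simp only [conjugatePairs, Finset.filter_filter, Finset.mem_filter, Finset.mem_univ, true_and]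
  constructor
  · rintro ⟨⟨hv1, -⟩, rfl⟩
    exact ⟨Submodule.subset_span (Set.mem_insert_of_mem _ rfl), hv1⟩
  · rintro ⟨hv, hv1⟩
    exact ⟨⟨hv1, isConjRoot_of_mem_normLines hcard hW hv hv1⟩,
      span_one_one_pair_eq_of_mem_normLines hW hv hv1⟩

theorem card_conjugatePairs_eq_ncard_normLines_mul [Fintype F] [FiniteDimensional F K]
    [IsGalois F K] (hcard : Module.finrank F K ≤ Fintype.card F) :
    (conjugatePairs F K).card =
      (normLines F K).ncard * (Fintype.card F * (Fintype.card F - 1)) := by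
  rw [Finset.card_eq_sum_card_fiberwise (f := fun v => Submodule.span F {((1 : K), (1 : K)), v})
    (t := (normLines F K).toFinite.toFinset) fun v hv => ?_]
  · rw [Finset.sum_congr rfl fun W hW => by
      rw [filter_conjugatePairs_span_eq hcard ((Set.Finite.mem_toFinset _).1 hW),
        card_filter_mem_fst_notMem_range ((Set.Finite.mem_toFinset _).1 hW)],
      Finset.sum_const, smul_eq_mul, Set.ncard_eq_toFinset_card _ (Set.toFinite _)]
  · simp only [conjugatePairs, Finset.coe_filter, Finset.mem_univ, true_and] at hv
    obtain ⟨σ, hσ⟩ := isConjRoot_iff_exists_algEquiv.1 hv.2.symm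
    have h := span_one_one_pair_algEquiv_mem_normLines hv.1 σ
    rw [hσ] at h
    rwa [Finset.mem_coe, Set.Finite.mem_toFinset]

end Counting

open scoped Classical in
theorem stmt11_general (q t : ℕ) (hqt : t ≤ q)
    (F K : Type*) [Field F] [Field K] [Algebra F K] [Fintype F] [Fintype K]
    (hF : Fintype.card F = q) (hK : Fintype.card K = q ^ t) :
    Set.ncard {W : Submodule F (K × K) | Module.finrank F W = 2 ∧ ((1 : K), (1 : K)) ∈ W ∧
        ∀ v ∈ W, v ≠ 0 →
          v.1 ≠ 0 ∧ v.2 ≠ 0 ∧ Algebra.norm F v.1 = Algebra.norm F v.2} =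
      (∑ y ∈ Finset.univ.filter (fun y : K => y ∉ Set.range (algebraMap F K)),
        Module.finrank F (Algebra.adjoin F ({y} : Set K))) / (q * (q - 1)) := by
  have : FiniteDimensional F K := Module.Finite.of_finite
  have hq : 1 < q := hF ▸ Fintype.one_lt_card
  have hrank : Module.finrank F K = t := by
    refine Nat.pow_right_injective hq (show q ^ _ = q ^ t from ?_)
    rw [← hK, ← hF, Module.card_eq_pow_finrank (K := F) (V := K)]
  have hpos : 0 < q * (q - 1) := Nat.mul_pos (by omega) (by omega)
  have hcount := card_conjugatePairs_eq_ncard_normLines_mul (F := F) (K := K) (by omega)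
  rw [card_conjugatePairs, hF] at hcount
  change (normLines F K).ncard = _
  convert (Nat.mul_div_cancel _ hpos).symm using 2
  -- `convert` rather than `rw`: here membership in `Set.range` is decided via `Fintype F`,
  -- in `card_conjugatePairs` classically.
  convert hcount using 3

open scoped Classical in
theorem stmt11 (q t : ℕ) (hq : IsPrimePow q) (ht : 2 ≤ t) (hqt : t ≤ q)
    (F K : Type*) [Field F] [Field K] [Algebra F K] [Fintype F] [Fintype K]
    (hF : Fintype.card F = q) (hK : Fintype.card K = q ^ t) :
    Set.ncard {W : Submodule F (K × K) | Module.finrank F W = 2 ∧ ((1 : K), (1 : K)) ∈ W ∧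
        ∀ v ∈ W, v ≠ 0 →
          v.1 ≠ 0 ∧ v.2 ≠ 0 ∧ Algebra.norm F v.1 = Algebra.norm F v.2} =
      (∑ y ∈ Finset.univ.filter (fun y : K => y ∉ Set.range (algebraMap F K)),
        Module.finrank F (Algebra.adjoin F ({y} : Set K))) / (q * (q - 1)) :=
  stmt11_general q t hqt F K hF hK
end

section
/- Let q be a prime power and t a prime, t ≥ 2. Let P = ⟨v⟩ be a point of PG(t−1, q^t) (over the field F_{q^t}) with v = (α₁, …, α_t) where α₁, …, α_t ∈ F_{q^t} are linearly independent over F_q (P is an 'imaginary point'), and let σ : x ↦ x^q act coordinatewise giving points P^{σ^i}. Let Q₁, Q₂ be two distinct points with all coordinates in F_q. Then no t of the t+2 points Q₁, Q₂, P, P^σ, …, P^{σ^{t−1}} lie in a common hyperplane of PG(t−1, q^t); equivalently, every t-subset of {Q₁, Q₂, P, P^σ, …, P^{σ^{t−1}}} is projectively independent. -/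
/-!
The conjugates `P, P^σ, …, P^{σ^{t-1}}` form a basis of `K^t`: the powers `σ^i`, `i < t`, are
distinct automorphisms, hence linearly independent over `K` (Dedekind), and `α` spans `K` over `F`.
Applying `σ` coordinatewise to an `F`-rational point `Q = ∑ cᵢ P^{σ^i}` gives
`Q = ∑ σ(cᵢ) P^{σ^{i+1}}`, so the coordinates of `Q` are `c, σ c, …, σ^{t-1} c`, and none of them vanishes.
A `t`-subset of the `t + 2` points omits two of them; the relations among all `t + 2` points are
spanned by the two expressing `Q₁` and `Q₂` in the basis, so the subset is independent iff the
corresponding `2 × 2` minor of these relations is nonzero. The only nontrivial minor, at basis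
positions `k ≠ l`, vanishes iff `d / e` is fixed by `σ^{l-k}` (`d`, `e` the first coordinates of
`Q₁`, `Q₂`); as `t` is prime this forces `σ (d / e) = d / e`, i.e. `Q₁ = (d / e) • Q₂`.
-/

theorem MulAction.smul_eq_self_of_pow_smul_eq {G X : Type*} [Group G] [MulAction G X] {g : G}
    {x : X} {k l : ℕ} (hp : (orderOf g).Prime) (hk : k < orderOf g) (hl : l < orderOf g)
    (hkl : k ≠ l) (h : g ^ k • x = g ^ l • x) : g • x = x := by
  wlog hlt : k < l generalizing k l
  · exact this hl hk hkl.symm h.symm (by omega)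
  have hper : Function.IsPeriodicPt (g • ·) (l - k) (g ^ k • x) := by
    rw [Function.IsPeriodicPt, Function.IsFixedPt, smul_iterate_apply, smul_smul, ← pow_add,
      Nat.sub_add_cancel hlt.le, h]
  have hord : Function.IsPeriodicPt (g • ·) (orderOf g) (g ^ k • x) := by
    rw [Function.IsPeriodicPt, Function.IsFixedPt, smul_iterate_apply, pow_orderOf_eq_one,
      one_smul]
  have hcop : (l - k).Coprime (orderOf g) :=
    (hp.coprime_iff_not_dvd.mpr (Nat.not_dvd_of_pos_of_lt (by omega) (by omega))).symm
  have := (hper.gcd hord).eq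
  rw [hcop, Function.iterate_one, smul_smul, ← pow_succ', pow_succ, mul_smul] at this
  exact smul_left_cancel _ this

theorem linearIndependent_algHom_apply {F K L ι κ : Type*} [Field F] [Ring K] [Algebra F K]
    [CommRing L] [IsDomain L] [Algebra F L] {τ : ι → K →ₐ[F] L} (hτ : Function.Injective τ)
    {α : κ → K} (hα : Submodule.span F (Set.range α) = ⊤) :
    LinearIndependent L (fun i j => τ i (α j)) := by
  let eval : (K →ₗ[F] L) →ₗ[L] κ → L :=
    { toFun := fun f j => f (α j)
      map_add' := fun _ _ => rfl
      map_smul' := fun _ _ => rfl }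
  have heval : LinearMap.ker eval = ⊥ :=
    LinearMap.ker_eq_bot'.mpr fun f hf => LinearMap.ext_on_range hα fun j => congrFun hf j
  exact ((linearIndependent_toLinearMap F K L).comp τ hτ).map' eval heval

section PairComplement

variable {K V : Type*} [Field K] [AddCommGroup V] [Module K V] {n : ℕ}

theorem Module.Basis.eq_of_sum_smul_cons_cons_eq_zero (b : Module.Basis (Fin n) K V) {x y : V}
    {c : Fin (n + 2) → K} (h : ∑ i, c i • (Fin.cons x (Fin.cons y b) : Fin (n + 2) → V) i = 0) :
    c = c 0 • (Fin.cons 1 (Fin.cons 0 (-b.repr x)) : Fin (n + 2) → K) +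
      c 1 • (Fin.cons 0 (Fin.cons 1 (-b.repr y)) : Fin (n + 2) → K) := by
  have hcoord (k : Fin n) : c 0 * b.repr x k + c 1 * b.repr y k + c k.succ.succ = 0 := by
    rw [Fin.sum_univ_succ, Fin.sum_univ_succ] at h
    have := congrArg (fun v => b.repr v k) h
    simpa [Finsupp.finsetSum_apply, Finsupp.single_apply, add_assoc] using this
  ext m
  refine Fin.cases ?_ (Fin.cases ?_ fun k => ?_) m
  · simp
  · simp
  · simp only [Pi.add_apply, Pi.smul_apply, Fin.cons_succ, Pi.neg_apply, smul_eq_mul]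
    linear_combination hcoord k

theorem linearIndepOn_cons_cons_compl_pair (b : Module.Basis (Fin n) K V) {x y : V}
    (hx : ∀ i, b.repr x i ≠ 0) (hy : ∀ i, b.repr y i ≠ 0)
    (hxy : ∀ k l, k ≠ l → b.repr x k * b.repr y l ≠ b.repr x l * b.repr y k)
    {m₁ m₂ : Fin (n + 2)} (hm : m₁ ≠ m₂) :
    LinearIndepOn K (Fin.cons x (Fin.cons y b) : Fin (n + 2) → V) {m₁, m₂}ᶜ := by
  set r₁ : Fin (n + 2) → K := Fin.cons 1 (Fin.cons 0 (-b.repr x))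
  set r₂ : Fin (n + 2) → K := Fin.cons 0 (Fin.cons 1 (-b.repr y))
  have hdet : r₁ m₁ * r₂ m₂ - r₁ m₂ * r₂ m₁ ≠ 0 := by
    revert hm
    refine Fin.cases ?_ (Fin.cases ?_ fun k => ?_) m₁ <;>
      refine Fin.cases ?_ (Fin.cases ?_ fun l => ?_) m₂ <;>
      simp [r₁, r₂, hx, hy, sub_eq_zero]
    exact hxy k l
  rw [linearIndepOn_iff]
  intro l hl hsum
  rw [Finsupp.linearCombination_apply, Finsupp.sum_fintype _ _ (by simp)] at hsum
  have hrel := b.eq_of_sum_smul_cons_cons_eq_zero hsum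
  have h₁ := (Finsupp.mem_supported' _ _).mp hl m₁ (by simp)
  have h₂ := (Finsupp.mem_supported' _ _).mp hl m₂ (by simp)
  rw [hrel] at h₁ h₂
  simp only [Pi.add_apply, Pi.smul_apply, smul_eq_mul] at h₁ h₂
  have h0 : l 0 = 0 := by
    refine (mul_eq_zero.mp ?_).resolve_right hdet
    linear_combination r₂ m₂ * h₁ - r₂ m₁ * h₂
  have h1 : l 1 = 0 := by
    refine (mul_eq_zero.mp ?_).resolve_right hdet
    linear_combination r₁ m₁ * h₂ - r₁ m₂ * h₁
  ext m
  rw [hrel, h0, h1]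
  simp

end PairComplement

section Conjugates

variable {F K ι : Type*} [Field F] [Field K] [Algebra F K]

def conjugates (σ : K ≃ₐ[F] K) (n : ℕ) (v : ι → K) : Fin n → ι → K :=
  fun i j => (σ ^ (i : ℕ)) (v j)

theorem linearIndependent_conjugates {σ : K ≃ₐ[F] K} {n : ℕ} (hn : n ≤ orderOf σ) {α : ι → K}
    (hα : Submodule.span F (Set.range α) = ⊤) : LinearIndependent K (conjugates σ n α) :=
  linearIndependent_algHom_apply (τ := fun i : Fin n => ((σ ^ (i : ℕ) : K ≃ₐ[F] K) : K →ₐ[F] K))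
    (fun i j hij => Fin.ext <| pow_injOn_Iio_orderOf (by simp; omega) (by simp; omega)
      (AlgEquiv.coe_toAlgHom_injective hij)) hα

theorem conjugates_add_one {σ : K ≃ₐ[F] K} {n : ℕ} [NeZero n] (hσ : orderOf σ = n) (v : ι → K)
    (i : Fin n) : conjugates σ n v (i + 1) = fun j => σ (conjugates σ n v i j) := by
  ext j
  rw [conjugates, conjugates, Fin.val_add, Fin.val_one', Nat.add_mod_mod,
    (hσ ▸ pow_mod_orderOf σ (i + 1) : σ ^ ((i + 1) % n) = _), pow_succ', AlgEquiv.mul_apply]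

namespace Module.Basis

variable {σ : K ≃ₐ[F] K} {n : ℕ} [NeZero n] {B : Basis (Fin n) K (ι → K)}

theorem repr_add_one_of_fixed (hB : ∀ i, B (i + 1) = fun j => σ (B i j)) {x : ι → K}
    (hx : ∀ j, σ (x j) = x j) (i : Fin n) : B.repr x (i + 1) = σ (B.repr x i) := by
  have hshift : x = ∑ i, σ (B.repr x (i - 1)) • B i := by
    rw [← Equiv.sum_comp (Equiv.addRight 1)]
    ext j
    calc x j = σ ((∑ i, B.repr x i • B i) j) := by rw [B.sum_repr, hx]
      _ = _ := by simp [Finset.sum_apply, hB]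
  conv_lhs => rw [hshift, B.repr_sum_self]
  rw [add_sub_cancel_right]

open Fin.NatCast in
theorem repr_eq_pow_apply_of_fixed (hB : ∀ i, B (i + 1) = fun j => σ (B i j)) {x : ι → K}
    (hx : ∀ j, σ (x j) = x j) (i : Fin n) : B.repr x i = (σ ^ (i : ℕ)) (B.repr x 0) := by
  suffices ∀ m : ℕ, B.repr x m = (σ ^ m) (B.repr x 0) by
    simpa only [Fin.cast_val_eq_self] using this i
  intro m
  induction m with
  | zero => simp
  | succ m ih =>
    rw [Nat.cast_succ, B.repr_add_one_of_fixed hB hx, ih, pow_succ', AlgEquiv.mul_apply]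

theorem repr_ne_zero_of_fixed (hB : ∀ i, B (i + 1) = fun j => σ (B i j)) {x : ι → K}
    (hx : ∀ j, σ (x j) = x j) (hx0 : x ≠ 0) (i : Fin n) : B.repr x i ≠ 0 := by
  intro hi
  apply hx0
  have h0 : B.repr x 0 = 0 := by
    rwa [B.repr_eq_pow_apply_of_fixed hB hx, map_eq_zero_iff _ (AlgEquiv.injective _)] at hi
  refine B.repr.injective (Finsupp.ext fun k => ?_)
  rw [B.repr_eq_pow_apply_of_fixed hB hx, h0, map_zero, map_zero, Finsupp.zero_apply]

theorem repr_mul_repr_ne_of_fixed (hσ : orderOf σ = n) (hn : n.Prime)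
    (hB : ∀ i, B (i + 1) = fun j => σ (B i j)) {x y : ι → K} (hx : ∀ j, σ (x j) = x j)
    (hy : ∀ j, σ (y j) = y j) (hx0 : x ≠ 0) (hy0 : y ≠ 0)
    (hxy : Submodule.span K {x} ≠ Submodule.span K {y}) {k l : Fin n} (hkl : k ≠ l) :
    B.repr x k * B.repr y l ≠ B.repr x l * B.repr y k := by
  intro h
  set d := B.repr x 0
  set e := B.repr y 0
  have he : e ≠ 0 := B.repr_ne_zero_of_fixed hB hy hy0 0
  have hfix : σ (d / e) = d / e := by
    refine MulAction.smul_eq_self_of_pow_smul_eq (x := d / e) (hσ ▸ hn) (hσ ▸ k.2) (hσ ▸ l.2)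
      (Fin.val_ne_of_ne hkl) ?_
    rw [AlgEquiv.smul_def, AlgEquiv.smul_def, map_div₀, map_div₀,
      ← B.repr_eq_pow_apply_of_fixed hB hx, ← B.repr_eq_pow_apply_of_fixed hB hx,
      ← B.repr_eq_pow_apply_of_fixed hB hy, ← B.repr_eq_pow_apply_of_fixed hB hy,
      div_eq_div_iff (B.repr_ne_zero_of_fixed hB hy hy0 k) (B.repr_ne_zero_of_fixed hB hy hy0 l)]
    exact h
  have hxr : x = (d / e) • y := by
    refine B.repr.injective (Finsupp.ext fun i => ?_)
    rw [map_smul, Finsupp.smul_apply, smul_eq_mul, B.repr_eq_pow_apply_of_fixed hB hx,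
      B.repr_eq_pow_apply_of_fixed hB hy]
    calc (σ ^ (i : ℕ)) d = (σ ^ (i : ℕ)) (d / e * e) := by rw [div_mul_cancel₀ d he]
      _ = d / e * (σ ^ (i : ℕ)) e := by
        rw [map_mul, AlgEquiv.coe_pow, Function.iterate_fixed hfix]
  apply hxy
  rw [hxr]
  exact Submodule.span_singleton_smul_eq
    (IsUnit.mk0 _ (div_ne_zero (B.repr_ne_zero_of_fixed hB hx hx0 0) he)) y

end Module.Basis

end Conjugates

theorem stmt14_general (q t : ℕ) (htp : Nat.Prime t)
    (F K : Type*) [Field F] [Field K] [Algebra F K] [Fintype F] [Fintype K]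
    (hF : Fintype.card F = q) (hK : Fintype.card K = q ^ t)
    (α : Fin t → K) (hα : LinearIndependent F α)
    (b₁ b₂ : Fin t → F) (hb₁ : b₁ ≠ 0) (hb₂ : b₂ ≠ 0)
    (hdist : Submodule.span K {(fun j => algebraMap F K (b₁ j) : Fin t → K)} ≠
      Submodule.span K {(fun j => algebraMap F K (b₂ j) : Fin t → K)})
    (v : Fin (t + 2) → Fin t → K)
    (hv : v = Fin.cons (fun j => algebraMap F K (b₁ j))
      (Fin.cons (fun j => algebraMap F K (b₂ j))
        (fun (i : Fin t) (j : Fin t) => α j ^ q ^ (i : ℕ)))) :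
    ∀ s : Finset (Fin (t + 2)), s.card = t →
      LinearIndependent K (fun i : {x // x ∈ s} => v i.val) := by
  have : NeZero t := ⟨htp.ne_zero⟩
  have hrank : Module.finrank F K = t := by
    have hcard := Module.card_eq_pow_finrank (K := F) (V := K)
    rw [hF, hK] at hcard
    exact Nat.pow_right_injective (hF ▸ Fintype.one_lt_card) hcard.symm
  set σ := FiniteField.frobeniusAlgEquivOfAlgebraic F K
  have hσ : orderOf σ = t := (FiniteField.orderOf_frobeniusAlgEquivOfAlgebraic F K).trans hrank
  have hP : (fun (i : Fin t) (j : Fin t) => α j ^ q ^ (i : ℕ)) = conjugates σ t α := by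
    ext i j
    rw [conjugates, AlgEquiv.coe_pow, FiniteField.coe_frobeniusAlgEquivOfAlgebraic_iterate, hF]
  have hli := linearIndependent_conjugates hσ.ge
    (hα.span_eq_top_of_card_eq_finrank (by rw [Fintype.card_fin, hrank]))
  let B := basisOfLinearIndependentOfCardEqFinrank hli (by simp)
  have hB : ⇑B = conjugates σ t α := coe_basisOfLinearIndependentOfCardEqFinrank _ _
  have hBσ : ∀ i, B (i + 1) = fun j => σ (B i j) := by
    simpa only [hB] using conjugates_add_one hσ α
  have hfixed (b : Fin t → F) (j : Fin t) : σ (algebraMap F K (b j)) = algebraMap F K (b j) :=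
    σ.commutes _
  have hne {b : Fin t → F} (hb : b ≠ 0) : (fun j => algebraMap F K (b j)) ≠ 0 := fun h =>
    hb (funext fun j => (algebraMap F K).injective (by simpa using congrFun h j))
  intro s hs
  obtain ⟨m₁, hm₁, m₂, hm₂, hm⟩ := Finset.one_lt_card.mp (by
    rw [Finset.card_compl, Fintype.card_fin, hs]; omega : 1 < sᶜ.card)
  subst hv
  rw [hP, ← hB]
  refine (linearIndepOn_cons_cons_compl_pair B (B.repr_ne_zero_of_fixed hBσ (hfixed b₁) (hne hb₁))
    (B.repr_ne_zero_of_fixed hBσ (hfixed b₂) (hne hb₂))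
    (fun k l hkl => B.repr_mul_repr_ne_of_fixed hσ htp hBσ (hfixed b₁) (hfixed b₂) (hne hb₁)
      (hne hb₂) hdist hkl) hm).mono ?_
  rintro i hi (rfl | rfl)
  exacts [Finset.mem_compl.mp hm₁ hi, Finset.mem_compl.mp hm₂ hi]

theorem stmt14 (q t : ℕ) (hq : IsPrimePow q) (htp : Nat.Prime t) (ht : 2 ≤ t)
    (F K : Type*) [Field F] [Field K] [Algebra F K] [Fintype F] [Fintype K]
    (hF : Fintype.card F = q) (hK : Fintype.card K = q ^ t)
    (α : Fin t → K) (hα : LinearIndependent F α)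
    (b₁ b₂ : Fin t → F) (hb₁ : b₁ ≠ 0) (hb₂ : b₂ ≠ 0)
    (hdist : Submodule.span K {(fun j => algebraMap F K (b₁ j) : Fin t → K)} ≠
      Submodule.span K {(fun j => algebraMap F K (b₂ j) : Fin t → K)})
    (v : Fin (t + 2) → Fin t → K)
    (hv : v = Fin.cons (fun j => algebraMap F K (b₁ j))
      (Fin.cons (fun j => algebraMap F K (b₂ j))
        (fun (i : Fin t) (j : Fin t) => α j ^ q ^ (i : ℕ)))) :
    ∀ s : Finset (Fin (t + 2)), s.card = t →
      LinearIndependent K (fun i : {x // x ∈ s} => v i.val) :=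
  stmt14_general q t htp F K hF hK α hα b₁ b₂ hb₁ hb₂ hdist v hv
end

section
/- Let q be a prime power, t ≥ 2, ν with gcd(ν, t) = 1, and σ: x ↦ x^{q^ν}. For α ∈ F_{q^t} with N(α) = 1 define φ(λ) = α λ^{q^ν}. Then the set L = {⟨(λ, φ(λ))⟩_{F_{q^t}} : λ ∈ F_{q^t}^*} ⊆ PG(1, q^t) is a scattered linear set of pseudoregulus type: it has exactly (q^t − 1)/(q − 1) points, and it is the image of {⟨(λ, λ^q)⟩ : λ ∈ F_{q^t}^*} under an element of PGL(2, q^t). -/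
/-!
The point `⟨(λ, α λ^{q^ν})⟩` equals `⟨(1, α λ^{q^ν - 1})⟩`, so the points are parametrised
injectively by the slopes `α λ^{q^ν - 1}`. In the cyclic group `K^*` of order `q^t - 1`, the
`(q^ν - 1)`-th powers form the subgroup of `n`-th roots of unity, `n = (q^t - 1)/(q - 1)`, because
`gcd(q^ν - 1, q^t - 1) = q^{gcd(ν, t)} - 1 = q - 1`; and `α` lies in it since `N(α) = α^n = 1`.
Hence the slopes are exactly the `n`-th roots of unity, whatever `α` and `ν` are: this gives the
count, and shows that the set coincides with the one for `α = 1`, `ν = 1`, which is the image of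
`L₀` under the identity.
-/

open Submodule

theorem IsCyclic.powMonoidHom_range_eq_ker {G : Type*} [CommGroup G] [IsCyclic G] [Finite G]
    (d : ℕ) : (powMonoidHom d : G →* G).range =
      (powMonoidHom (Nat.card G / (Nat.card G).gcd d)).ker := by
  set N := Nat.card G
  have hdiv : N / N.gcd d ∣ N := Nat.div_dvd_of_dvd (Nat.gcd_dvd_left N d)
  refine Subgroup.eq_of_le_of_card_ge ?_ ?_
  · rintro _ ⟨x, rfl⟩
    have hN : N ∣ d * (N / N.gcd d) := by
      simpa [Nat.mul_div_cancel' (Nat.gcd_dvd_left N d)] using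
        mul_dvd_mul_right (Nat.gcd_dvd_right N d) (N / N.gcd d)
    simp only [MonoidHom.mem_ker, powMonoidHom_apply, ← pow_mul]
    exact orderOf_dvd_iff_pow_eq_one.1 ((orderOf_dvd_natCard x).trans hN)
  · rw [IsCyclic.card_powMonoidHom_ker, IsCyclic.card_powMonoidHom_range, Nat.gcd_eq_right hdiv]

section FiniteField

variable {K : Type*} [Field K] [Finite K]

theorem FiniteField.ne_zero_of_dvd_card_sub_one {m : ℕ} (hm : m ∣ Nat.card K - 1) : m ≠ 0 := by
  rintro rfl
  have := Finite.one_lt_card (α := K)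
  simp only [zero_dvd_iff] at hm
  omega

theorem FiniteField.exists_pow_eq_iff_pow_eq_one {d m : ℕ}
    (hm : (Nat.card K - 1) / (Nat.card K - 1).gcd d = m) {μ : K} :
    (∃ x : K, x ≠ 0 ∧ x ^ d = μ) ↔ μ ^ m = 1 := by
  have hrange := IsCyclic.powMonoidHom_range_eq_ker (G := Kˣ) d
  rw [Nat.card_units, hm] at hrange
  constructor
  · rintro ⟨x, hx, rfl⟩
    have hmem : Units.mk0 x hx ^ d ∈ (powMonoidHom m : Kˣ →* Kˣ).ker :=
      hrange ▸ ⟨Units.mk0 x hx, rfl⟩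
    simpa [Units.ext_iff] using hmem
  · intro hμ
    have hm0 : m ≠ 0 := FiniteField.ne_zero_of_dvd_card_sub_one
      (hm ▸ Nat.div_dvd_of_dvd (Nat.gcd_dvd_left _ _))
    have hmem : (IsUnit.of_pow_eq_one hμ hm0).unit ∈ (powMonoidHom d : Kˣ →* Kˣ).range := by
      rw [hrange]; simpa [Units.ext_iff] using hμ
    obtain ⟨y, hy⟩ := hmem
    exact ⟨y, y.ne_zero, by simpa [Units.ext_iff] using hy⟩

theorem FiniteField.image_mul_pow_eq_setOf_pow_eq_one {d m : ℕ}
    (hm : (Nat.card K - 1) / (Nat.card K - 1).gcd d = m) {β : K} (hβ : β ^ m = 1) :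
    (fun x => β * x ^ d) '' {x | x ≠ 0} = {μ | μ ^ m = 1} := by
  have hβ0 : β ≠ 0 := by
    obtain ⟨x, hx, rfl⟩ := (FiniteField.exists_pow_eq_iff_pow_eq_one hm).2 hβ
    exact pow_ne_zero d hx
  ext μ
  calc μ ∈ (fun x => β * x ^ d) '' {x | x ≠ 0} ↔ ∃ x : K, x ≠ 0 ∧ x ^ d = μ / β := by
        simp only [Set.mem_image, Set.mem_ofPred_eq, eq_div_iff hβ0, mul_comm β]
    _ ↔ (μ / β) ^ m = 1 := FiniteField.exists_pow_eq_iff_pow_eq_one hm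
    _ ↔ μ ^ m = 1 := by rw [div_pow, hβ, div_one]

theorem FiniteField.ncard_setOf_pow_eq_one {m : ℕ} (hm : m ∣ Nat.card K - 1) :
    {μ : K | μ ^ m = 1}.ncard = m := by
  have hset :
      {μ : K | μ ^ m = 1} = Units.val '' ((powMonoidHom m : Kˣ →* Kˣ).ker : Set Kˣ) := by
    ext μ
    refine ⟨fun hμ => ?_, ?_⟩
    · have hunit := IsUnit.of_pow_eq_one hμ (FiniteField.ne_zero_of_dvd_card_sub_one hm)
      exact ⟨hunit.unit, by simpa [Units.ext_iff] using hμ, hunit.unit_spec⟩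
    · rintro ⟨u, hu, rfl⟩
      simpa [Units.ext_iff] using hu
  rw [hset, Set.ncard_image_of_injective _ Units.val_injective, ← Nat.card_coe_set_eq,
    SetLike.coe_sort_coe, IsCyclic.card_powMonoidHom_ker, Nat.card_units, Nat.gcd_eq_right hm]

end FiniteField

theorem setOf_span_singleton_eq_image {K V : Type*} [Field K] [AddCommGroup V] [Module K V]
    (u p : K → V) (c : K → K) (h : ∀ x ≠ 0, u x = x • p (c x)) :
    {P : Submodule K V | ∃ x, x ≠ 0 ∧ P = span K {u x}} =
      (fun μ => span K {p μ}) '' (c '' {x | x ≠ 0}) := by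
  ext P
  simp only [Set.mem_ofPred_eq, Set.image_image]
  refine exists_congr fun x => and_congr_right fun hx => ?_
  rw [h x hx, span_singleton_smul_eq (isUnit_iff_ne_zero.2 hx), eq_comm]

theorem span_singleton_one_prod_injective {K : Type*} [Field K] :
    Function.Injective fun μ : K => span K {((1 : K), μ)} := by
  intro μ μ' h
  obtain ⟨z, hz⟩ := span_singleton_eq_span_singleton.1 h
  simp only [Prod.smul_mk, Units.smul_def, smul_eq_mul, mul_one, Prod.mk.injEq] at hz
  rw [← hz.2, hz.1, one_mul]

theorem stmt19_general (q t ν : ℕ) (hcop : Nat.gcd ν t = 1)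
    (F K : Type*) [Field F] [Field K] [Algebra F K] [Fintype F] [Fintype K]
    (hF : Fintype.card F = q) (hK : Fintype.card K = q ^ t)
    (α : K) (hα : Algebra.norm F α = 1) :
    Set.ncard {P : Submodule K (K × K) | ∃ lam : K, lam ≠ 0 ∧
        P = Submodule.span K {(lam, α * lam ^ q ^ ν)}} = (q ^ t - 1) / (q - 1) ∧
    ∃ M : Matrix (Fin 2) (Fin 2) K, IsUnit M.det ∧
      {P : Submodule K (Fin 2 → K) | ∃ lam : K, lam ≠ 0 ∧
          P = Submodule.span K {M.mulVec ![lam, lam ^ q]}} =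
        {P : Submodule K (Fin 2 → K) | ∃ lam : K, lam ≠ 0 ∧
          P = Submodule.span K {![lam, α * lam ^ q ^ ν]}} := by
  rw [← Nat.card_eq_fintype_card] at hF hK
  have hcard_div_gcd : ∀ s, s.gcd t = 1 →
      (Nat.card K - 1) / (Nat.card K - 1).gcd (q ^ s - 1) = (q ^ t - 1) / (q - 1) := by
    intro s hs
    rw [hK, Nat.pow_sub_one_gcd_pow_sub_one, Nat.gcd_comm, hs, pow_one]
  have hαn : α ^ ((q ^ t - 1) / (q - 1)) = 1 := by
    rw [← hK, ← hF, ← FiniteField.algebraMap_norm_eq_pow, hα, map_one]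
  have hpow (s : ℕ) (x : K) : x * x ^ (q ^ s - 1) = x ^ q ^ s :=
    mul_pow_sub_one (pow_ne_zero s (by have := Finite.one_lt_card (α := F); omega)) x
  have slopes_ν := FiniteField.image_mul_pow_eq_setOf_pow_eq_one (hcard_div_gcd ν hcop) hαn
  have slopes_1 := FiniteField.image_mul_pow_eq_setOf_pow_eq_one
    (hcard_div_gcd 1 (Nat.gcd_one_left t)) (one_pow _)
  constructor
  · rw [setOf_span_singleton_eq_image _ (fun μ => ((1 : K), μ)) (fun x => α * x ^ (q ^ ν - 1))
      (fun x _ => by simp [← hpow ν x, mul_left_comm x α]), slopes_ν,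
      Set.ncard_image_of_injective _ span_singleton_one_prod_injective,
      FiniteField.ncard_setOf_pow_eq_one (hcard_div_gcd 1 (Nat.gcd_one_left t) ▸
        Nat.div_dvd_of_dvd (Nat.gcd_dvd_left _ _))]
  · refine ⟨1, by simp, ?_⟩
    simp only [Matrix.one_mulVec]
    rw [setOf_span_singleton_eq_image _ (fun μ => ![1, μ]) (fun x => 1 * x ^ (q ^ 1 - 1))
        (fun x _ => by simpa using (hpow 1 x).symm),
      setOf_span_singleton_eq_image _ (fun μ => ![1, μ]) (fun x => α * x ^ (q ^ ν - 1))
        (fun x _ => by simp [← hpow ν x, mul_left_comm x α]), slopes_ν, slopes_1]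

theorem stmt19 (q t ν : ℕ) (hq : IsPrimePow q) (ht : 2 ≤ t) (hcop : Nat.gcd ν t = 1)
    (F K : Type*) [Field F] [Field K] [Algebra F K] [Fintype F] [Fintype K]
    (hF : Fintype.card F = q) (hK : Fintype.card K = q ^ t)
    (α : K) (hα : Algebra.norm F α = 1) :
    Set.ncard {P : Submodule K (K × K) | ∃ lam : K, lam ≠ 0 ∧
        P = Submodule.span K {(lam, α * lam ^ q ^ ν)}} = (q ^ t - 1) / (q - 1) ∧
    ∃ M : Matrix (Fin 2) (Fin 2) K, IsUnit M.det ∧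
      {P : Submodule K (Fin 2 → K) | ∃ lam : K, lam ≠ 0 ∧
          P = Submodule.span K {M.mulVec ![lam, lam ^ q]}} =
        {P : Submodule K (Fin 2 → K) | ∃ lam : K, lam ≠ 0 ∧
          P = Submodule.span K {![lam, α * lam ^ q ^ ν]}} :=
  stmt19_general q t ν hcop F K hF hK α hα
end
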